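/- arXiv:1209.2391 — 4 statements merged into one kernel-verified Lean document; each statement's English description precedes it below -/
import Mathlib

section
/- Let T be a fully-resolved X-tree, let w be a proper edge-weighting of T, and let d = d_{(T,w)}. If L ⊆ binom(X,2) contains a shellable lasso for T, then cl_R(L) = binom(X,2), i.e., starting from the values of d on L, repeated application of the extension rule (R) eventually assigns a d-value to every cord of X. -/
open SimpleGraph

/-- An `X`-tree: a finite tree whose leaf set is (the image of) `X`,
with no vertices of degree 2. -/
structure XTree (α : Type) (X : Set α) where
  V : Type
  fintypeV : Fintype V
  tree : SimpleGraph V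
  isTree : tree.IsTree
  ι : α → V
  ι_injOn : Set.InjOn ι X
  leaf_iff : ∀ v : V, (tree.neighborSet v).ncard = 1 ↔ v ∈ ι '' X
  no_deg_two : ∀ v : V, (tree.neighborSet v).ncard ≠ 2

namespace XTree

variable {α : Type} {X : Set α}

/-- A vertex is interior if it is not a leaf. -/
def IsInterior (T : XTree α X) (v : T.V) : Prop := v ∉ T.ι '' X

/-- Fully-resolved: every interior vertex has degree 3. -/
def IsFullyResolved (T : XTree α X) : Prop :=
  ∀ v : T.V, T.IsInterior v → (T.tree.neighborSet v).ncard = 3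

/-- The unique path between two vertices of the tree. -/
noncomputable def treePath (T : XTree α X) (u v : T.V) : T.tree.Walk u v :=
  (T.isTree.existsUnique_path u v).exists.choose

lemma treePath_isPath (T : XTree α X) (u v : T.V) : (T.treePath u v).IsPath :=
  (T.isTree.existsUnique_path u v).exists.choose_spec

/-- Weighted path distance between two vertices. -/
noncomputable def pathDist (T : XTree α X) (w : Sym2 T.V → ℝ) (u v : T.V) : ℝ :=
  ((T.treePath u v).edges.map w).sum

lemma treePath_symm (T : XTree α X) (u v : T.V) :
    T.treePath u v = (T.treePath v u).reverse :=
  (T.isTree.existsUnique_path u v).unique (T.treePath_isPath u v)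
    ((T.treePath_isPath v u).reverse)

lemma pathDist_symm (T : XTree α X) (w : Sym2 T.V → ℝ) (u v : T.V) :
    T.pathDist w u v = T.pathDist w v u := by
  unfold pathDist
  rw [treePath_symm, SimpleGraph.Walk.edges_reverse, List.map_reverse, List.sum_reverse]

/-- The induced distance on pairs of leaf labels. -/
noncomputable def cordDist (T : XTree α X) (w : Sym2 T.V → ℝ) : Sym2 α → ℝ :=
  Sym2.lift ⟨fun a b => T.pathDist w (T.ι a) (T.ι b),
    fun a b => T.pathDist_symm w (T.ι a) (T.ι b)⟩

/-- An edge-weighting assigns a nonnegative weight to every edge. -/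
def IsEdgeWeighting (T : XTree α X) (w : Sym2 T.V → ℝ) : Prop :=
  ∀ e ∈ T.tree.edgeSet, 0 ≤ w e

/-- A proper edge-weighting gives positive weight to every interior edge
(i.e. every edge not incident with a leaf). -/
def IsProperWeighting (T : XTree α X) (w : Sym2 T.V → ℝ) : Prop :=
  T.IsEdgeWeighting w ∧ ∀ e ∈ T.tree.edgeSet, (∀ v ∈ e, T.IsInterior v) → 0 < w e

/-- The set of cords (2-element subsets) of `X`. -/
def cords (X : Set α) : Set (Sym2 α) := {c | ¬ c.IsDiag ∧ ∀ a ∈ c, a ∈ X}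

/-- Two weighted trees are `L`-isometric if their leaf distances agree on `L`. -/
def LIsometric (T : XTree α X) (w : Sym2 T.V → ℝ) (T' : XTree α X) (w' : Sym2 T'.V → ℝ)
    (L : Set (Sym2 α)) : Prop :=
  ∀ c ∈ L, T.cordDist w c = T'.cordDist w' c

/-- `L` is an edge-weight lasso for `T`. -/
def IsEdgeWeightLasso (T : XTree α X) (L : Set (Sym2 α)) : Prop :=
  ∀ w w' : Sym2 T.V → ℝ, T.IsProperWeighting w → T.IsProperWeighting w' →
    LIsometric T w T w' L → ∀ e ∈ T.tree.edgeSet, w e = w' e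

/-- Two `X`-trees are equivalent if there is a graph isomorphism fixing `X`. -/
def Equivalent (T T' : XTree α X) : Prop :=
  ∃ φ : T.tree ≃g T'.tree, ∀ a ∈ X, φ (T.ι a) = T'.ι a

/-- `L` is a topological lasso for `T`. -/
def IsTopologicalLasso (T : XTree α X) (L : Set (Sym2 α)) : Prop :=
  ∀ (T' : XTree α X) (w : Sym2 T.V → ℝ) (w' : Sym2 T'.V → ℝ),
    T.IsProperWeighting w → T'.IsProperWeighting w' →
    LIsometric T w T' w' L → Equivalent T T'

/-- `L` is a strong lasso for `T`. -/
def IsStrongLasso (T : XTree α X) (L : Set (Sym2 α)) : Prop :=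
  IsEdgeWeightLasso T L ∧ IsTopologicalLasso T L

/-- The set of leaf labels on the side of edge `e` containing endpoint `u`. -/
def sideSet (T : XTree α X) (e : Sym2 T.V) (u : T.V) : Set α :=
  {a | a ∈ X ∧ (T.tree.deleteEdges {e}).Reachable (T.ι a) u}

/-- The clusters of `T`: leaf sets of the two components of `T - e`, over all edges `e`. -/
def clus (T : XTree α X) : Set (Set α) :=
  {A | ∃ e ∈ T.tree.edgeSet, ∃ u ∈ e, A = T.sideSet e u}

/-- A stable transversal for a collection of subsets of `α`. -/
def IsStableTransversal (C : Set (Set α)) (f : Set α → α) : Prop :=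
  (∀ A ∈ C, f A ∈ A) ∧ ∀ A ∈ C, ∀ B ∈ C, f A ∈ B → B ⊆ A → f A = f B

/-- Leaf labels of the component of `T - v` containing the vertex `u`. -/
def compSet (T : XTree α X) (v u : T.V) : Set α :=
  {a | a ∈ X ∧ ∃ p : T.tree.Walk (T.ι a) u, v ∉ p.support}

/-- The triplet cover `L_{(T,f)}` generated by a transversal `f`. -/
def tripletCoverOf (T : XTree α X) (f : Set α → α) : Set (Sym2 α) :=
  {c | ∃ v u₁ u₂ : T.V, T.IsInterior v ∧ T.tree.Adj v u₁ ∧ T.tree.Adj v u₂ ∧ u₁ ≠ u₂ ∧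
    c = s(f (T.compSet v u₁), f (T.compSet v u₂))}

/-- `L` is a stable triplet cover of `T`. -/
def IsStableTripletCover (T : XTree α X) (L : Set (Sym2 α)) : Prop :=
  ∃ f : Set α → α, IsStableTransversal (clus T) f ∧ L = tripletCoverOf T f

/-- `T|{a,b,c,d}` is the quartet tree `ab||cd`: the four leaves are distinct members
of `X` and the path from `a` to `b` is vertex-disjoint from the path from `c` to `d`. -/
def Quartet (T : XTree α X) (a b c d : α) : Prop :=
  a ∈ X ∧ b ∈ X ∧ c ∈ X ∧ d ∈ X ∧ List.Pairwise (· ≠ ·) [a, b, c, d] ∧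
  ∀ (p : T.tree.Walk (T.ι a) (T.ι b)) (q : T.tree.Walk (T.ι c) (T.ι d)),
    p.IsPath → q.IsPath → ∀ v, v ∈ p.support → v ∉ q.support

/-- The cord `c` admits pivots relative to already-available cords `L ∪ earlier`. -/
def HasPivots (T : XTree α X) (L : Set (Sym2 α)) (earlier : List (Sym2 α))
    (c : Sym2 α) : Prop :=
  ∃ a b p q : α, c = s(a, b) ∧ Quartet T a p q b ∧
    ∀ c' ∈ [s(a, p), s(a, q), s(b, p), s(b, q), s(p, q)], c' ∈ L ∨ c' ∈ earlier

/-- `ord` is a shellable ordering of `cords X - L` with respect to `T`. -/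
def IsShellableOrdering (T : XTree α X) (L : Set (Sym2 α)) (ord : List (Sym2 α)) : Prop :=
  ord.Nodup ∧ (∀ c, c ∈ ord ↔ c ∈ cords X \ L) ∧
  ∀ i (h : i < ord.length), HasPivots T L (ord.take i) (ord.get ⟨i, h⟩)

/-- `L` is a shellable lasso for `T`: `L ⊆ cords X`, every element of `X` occurs in some
cord of `L`, and `cords X - L` admits a shellable ordering. -/
def IsShellableLasso (T : XTree α X) (L : Set (Sym2 α)) : Prop :=
  L ⊆ cords X ∧ (∀ a ∈ X, ∃ c ∈ L, a ∈ c) ∧ ∃ ord, IsShellableOrdering T L ord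

/-- The graph `(Xs, L)` is a 2d-tree. -/
def Is2dTree (Xs : Set α) (L : Set (Sym2 α)) : Prop :=
  ∃ ord : List α, ord.Nodup ∧ (∀ a, a ∈ ord ↔ a ∈ Xs) ∧
    ∃ h2 : 2 ≤ ord.length,
      s(ord.get ⟨0, by omega⟩, ord.get ⟨1, by omega⟩) ∈ L ∧
      ∀ i (h : i < ord.length), 2 ≤ i →
        {b | b ∈ ord.take i ∧ s(ord.get ⟨i, h⟩, b) ∈ L}.ncard = 2

/-- Leaves `x` and `y` form a cherry of `T`. -/
def IsCherry (T : XTree α X) (x y : α) : Prop :=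
  x ≠ y ∧ x ∈ X ∧ y ∈ X ∧ ∃ v : T.V, T.tree.Adj (T.ι x) v ∧ T.tree.Adj (T.ι y) v

/-- `T'` is (equivalent to) the restriction `T|Y` of `T` to `Y ⊆ X`, characterized by the
fact that the clusters of `T|Y` are exactly the nonempty proper restrictions to `Y`
of clusters of `T`. -/
def IsRestrictionOf {Y : Set α} (T' : XTree α Y) (T : XTree α X) : Prop :=
  Y ⊆ X ∧ clus T' = {A | (∃ B ∈ clus T, A = B ∩ Y) ∧ A.Nonempty ∧ A ≠ Y}

open Classical in
/-- One application of the extension rule (R), acting on a state consisting of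
the current set of cords together with the current distance values. -/
def RStep (Xs : Set α) (S S' : Set (Sym2 α) × (Sym2 α → ℝ)) : Prop :=
  ∃ x y u z : α, x ∈ Xs ∧ y ∈ Xs ∧ u ∈ Xs ∧ z ∈ Xs ∧
    List.Pairwise (· ≠ ·) [x, y, u, z] ∧
    s(x, y) ∈ S.1 ∧ s(y, u) ∈ S.1 ∧ s(y, z) ∈ S.1 ∧ s(x, u) ∈ S.1 ∧ s(u, z) ∈ S.1 ∧
    s(x, z) ∉ S.1 ∧
    S.2 s(x, y) + S.2 s(u, z) < S.2 s(x, u) + S.2 s(y, z) ∧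
    S'.1 = insert s(x, z) S.1 ∧
    S'.2 = Function.update S.2 s(x, z) (S.2 s(x, u) + S.2 s(y, z) - S.2 s(y, u))

/-- `S` is the result `cl_R(L)` (with its `d`-values) of exhaustively applying rule (R)
starting from `L` with initial distance values `d`. -/
def IsRClosureOf (Xs : Set α) (L : Set (Sym2 α)) (d : Sym2 α → ℝ)
    (S : Set (Sym2 α) × (Sym2 α → ℝ)) : Prop :=
  Relation.ReflTransGen (RStep Xs) (L, d) S ∧ ∀ S', ¬ RStep Xs S S'

end XTree

/-!
An edge `e` of `T` contributes `w e` to `d(u, v)` exactly when it separates `u` from `v`, so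
`d = d_{(T,w)}` is a nonnegative combination of split metrics. Two edges of a tree never induce
incompatible splits of four vertices, which gives the four-point condition; by it, every value
that rule (R) assigns is the true distance. If `T|{a,b,p,q}` is `ap||qb`, the edge by which the
path from `q` to `a` leaves the path from `q` to `b` is interior and separates `{a, p}` from
`{q, b}`, so `d(a,p) + d(q,b) < d(a,q) + d(p,b)` strictly and rule (R) fires on `ab` as soon as
its pivot cords are present. Following a shellable ordering, a state in which (R) no longer
applies therefore contains every cord.
-/

namespace SimpleGraph

variable {V : Type*} {G : SimpleGraph V}

theorem Preconnected.reachable_deleteEdges_or (hG : G.Preconnected) (a b x : V) :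
    (G.deleteEdges {s(a, b)}).Reachable x a ∨ (G.deleteEdges {s(a, b)}).Reachable x b := by
  suffices ∀ {y} (p : G.Walk x y), y = a ∨ y = b →
      (G.deleteEdges {s(a, b)}).Reachable x a ∨ (G.deleteEdges {s(a, b)}).Reachable x b from
    this (hG x a).some (Or.inl rfl)
  intro y p
  induction p with
  | nil => rintro (rfl | rfl) <;> simp
  | @cons u v _ huv q ih =>
    intro hy
    by_cases he : s(u, v) = s(a, b)
    · rcases Sym2.eq_iff.mp he with ⟨rfl, -⟩ | ⟨rfl, -⟩ <;> simp
    · have huv' : (G.deleteEdges {s(a, b)}).Reachable u v :=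
        Adj.reachable (by simp [deleteEdges_adj, huv, he])
      exact (ih hy).imp huv'.trans huv'.trans

theorem Preconnected.reachable_deleteEdges_iff (hG : G.Preconnected) (a b x y : V) :
    (G.deleteEdges {s(a, b)}).Reachable x y ↔
      ((G.deleteEdges {s(a, b)}).Reachable x a ↔ (G.deleteEdges {s(a, b)}).Reachable y a) := by
  refine ⟨fun h => ⟨h.symm.trans, h.trans⟩, fun h => ?_⟩
  by_cases hx : (G.deleteEdges {s(a, b)}).Reachable x a
  · exact hx.trans (h.mp hx).symm
  · have hy : ¬ (G.deleteEdges {s(a, b)}).Reachable y a := mt h.mpr hx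
    exact ((hG.reachable_deleteEdges_or a b x).resolve_left hx).trans
      ((hG.reachable_deleteEdges_or a b y).resolve_left hy).symm

theorem Walk.exists_adj_mem_support {u v x : V} (p : G.Walk u v) (huv : u ≠ v)
    (hx : x ∈ p.support) : ∃ y ∈ p.support, G.Adj x y := by
  obtain ⟨e, he, hxe⟩ := (mem_support_iff_exists_mem_edges_of_not_nil (not_nil_of_ne huv)).mp hx
  obtain ⟨y, rfl⟩ := Sym2.mem_iff_exists.mp hxe
  exact ⟨y, p.snd_mem_support_of_mem_edges he, p.adj_of_mem_edges he⟩

theorem Walk.IsPath.exists_adj_adj_ne {u v x : V} {p : G.Walk u v} (hp : p.IsPath)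
    (hx : x ∈ p.support) (hux : u ≠ x) (hxv : x ≠ v) :
    ∃ y z, G.Adj x y ∧ G.Adj x z ∧ y ≠ z := by
  classical
  have hq : ¬ (p.takeUntil x hx).Nil := not_nil_of_ne hux
  have hr : ¬ (p.dropUntil x hx).Nil := not_nil_of_ne hxv
  refine ⟨_, _, (adj_penultimate hq).symm, adj_snd hr, fun h => ?_⟩
  have hdisj := hp.isTrail.disjoint_edges_takeUntil_dropUntil hx
  exact hdisj (mk_penultimate_end_mem_edges hq) (h ▸ Sym2.eq_swap ▸ mk_start_snd_mem_edges hr)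

end SimpleGraph

lemma Bool.ite_add_ite_le {p q r s : Bool} {c : ℝ} (hc : 0 ≤ c) (h : ¬ (p = q ∧ r = s ∧ p ≠ r)) :
    (if p = r then 0 else c) + (if q = s then 0 else c) ≤
      (if p = q then 0 else c) + (if r = s then 0 else c) := by
  cases p <;> cases q <;> cases r <;> cases s <;> simp at h ⊢ <;> linarith

namespace XTree

open Walk

variable {α : Type} {X : Set α} {T : XTree α X}

lemma eq_treePath {u v : T.V} (p : T.tree.Walk u v) (hp : p.IsPath) : p = T.treePath u v :=
  (T.isTree.existsUnique_path u v).unique hp (T.treePath_isPath u v)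

lemma isInterior_of_adj_of_adj {v x y : T.V} (hx : T.tree.Adj v x) (hy : T.tree.Adj v y)
    (hxy : x ≠ y) : T.IsInterior v := by
  intro hv
  obtain ⟨z, hz⟩ := Set.ncard_eq_one.mp ((T.leaf_iff v).mpr hv)
  have hx' : x ∈ T.tree.neighborSet v := hx
  have hy' : y ∈ T.tree.neighborSet v := hy
  rw [hz, Set.mem_singleton_iff] at hx' hy'
  exact hxy (hx'.trans hy'.symm)

variable (T) in
def SameSide (e : Sym2 T.V) (u v : T.V) : Prop := (T.tree.deleteEdges {e}).Reachable u v

lemma sameSide_of_notMem_edges {e : Sym2 T.V} {u v : T.V} (p : T.tree.Walk u v)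
    (he : e ∉ p.edges) : T.SameSide e u v := by
  by_contra h
  exact he (p.mem_edges_of_not_reachable_deleteEdges h)

lemma mem_treePath_edges_iff {e : Sym2 T.V} {u v : T.V} :
    e ∈ (T.treePath u v).edges ↔ ¬ T.SameSide e u v := by
  classical
  refine ⟨fun he hs => ?_, fun h => (T.treePath u v).mem_edges_of_not_reachable_deleteEdges h⟩
  induction e with
  | h a b =>
    obtain ⟨p, hp⟩ := reachable_deleteEdges_iff_exists_walk.mp hs
    rw [← eq_treePath p.bypass p.bypass_isPath] at he
    exact hp (p.edges_bypass_subset_edges he)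

lemma sameSide_of_mem_support {e : Sym2 T.V} {u v x : T.V} (h : T.SameSide e u v)
    (hx : x ∈ (T.treePath u v).support) : T.SameSide e u x := by
  classical
  refine sameSide_of_notMem_edges ((T.treePath u v).takeUntil x hx) fun he => ?_
  exact mem_treePath_edges_iff.mp ((T.treePath u v).edges_takeUntil_subset_edges hx he) h

lemma exists_bool_sameSide_iff (e : Sym2 T.V) :
    ∃ f : T.V → Bool, ∀ x y, T.SameSide e x y ↔ f x = f y := by
  classical
  induction e with
  | h a b =>
    refine ⟨fun x => decide (T.SameSide s(a, b) x a), fun x y => ?_⟩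
    rw [SameSide, T.isTree.connected.preconnected.reachable_deleteEdges_iff a b x y]
    exact decide_eq_decide.symm

variable (T) in
def Splits (e : Sym2 T.V) (P Q R S : T.V) : Prop :=
  T.SameSide e P Q ∧ T.SameSide e R S ∧ ¬ T.SameSide e P R

lemma Splits.sameSide_or_sameSide {e e' : Sym2 T.V} {P Q R S : T.V}
    (h : T.Splits e P Q R S) : T.SameSide e' P Q ∨ T.SameSide e' R S := by
  by_contra! h'
  rw [← mem_treePath_edges_iff, ← mem_treePath_edges_iff] at h'
  induction e' with
  | h a b =>
    have ha₁ := sameSide_of_mem_support h.1 ((T.treePath P Q).fst_mem_support_of_mem_edges h'.1)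
    have ha₂ := sameSide_of_mem_support h.2.1 ((T.treePath R S).fst_mem_support_of_mem_edges h'.2)
    exact h.2.2 (ha₁.trans ha₂.symm)

lemma Splits.not_splits {e e' : Sym2 T.V} {P Q R S : T.V} (h : T.Splits e P Q R S) :
    ¬ T.Splits e' P S R Q := by
  rintro ⟨hPS, hRQ, hPR⟩
  rcases h.sameSide_or_sameSide (e' := e') with hPQ | hRS
  · exact hPR (hPQ.trans hRQ.symm)
  · exact hPR (hPS.trans hRS.symm)

variable (T) in
noncomputable def cutWeight (w : Sym2 T.V → ℝ) (e : Sym2 T.V) (u v : T.V) : ℝ :=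
  open Classical in if T.SameSide e u v then 0 else w e

lemma pathDist_eq_sum_cutWeight [Fintype T.tree.edgeSet] (w : Sym2 T.V → ℝ) (u v : T.V) :
    T.pathDist w u v = ∑ e ∈ T.tree.edgeFinset, T.cutWeight w e u v := by
  classical
  have hfilter : T.tree.edgeFinset.filter (· ∈ (T.treePath u v).edges) =
      (T.treePath u v).edges.toFinset := by
    ext e
    simpa using fun he => (T.treePath u v).edges_subset_edgeSet he
  rw [pathDist, ← List.sum_toFinset _ (T.treePath_isPath u v).isTrail.edges_nodup, ← hfilter,
    Finset.sum_filter]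
  refine Finset.sum_congr rfl fun e _ => ?_
  simp only [cutWeight, mem_treePath_edges_iff, ite_not]

lemma cutWeight_add_le {w : Sym2 T.V → ℝ} {e : Sym2 T.V} (hw : 0 ≤ w e) {P Q R S : T.V}
    (h : ¬ T.Splits e P Q R S) :
    T.cutWeight w e P R + T.cutWeight w e Q S ≤ T.cutWeight w e P Q + T.cutWeight w e R S := by
  obtain ⟨f, hf⟩ := exists_bool_sameSide_iff e
  simp only [cutWeight, Splits, hf] at h ⊢
  exact Bool.ite_add_ite_le hw h

lemma pathDist_add_le_of_forall_not_splits {w : Sym2 T.V → ℝ} (hw : T.IsEdgeWeighting w)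
    {P Q R S : T.V} (h : ∀ e ∈ T.tree.edgeSet, ¬ T.Splits e P Q R S) :
    T.pathDist w P R + T.pathDist w Q S ≤ T.pathDist w P Q + T.pathDist w R S := by
  classical
  have := T.fintypeV
  simp only [pathDist_eq_sum_cutWeight, ← Finset.sum_add_distrib]
  exact Finset.sum_le_sum fun e he =>
    cutWeight_add_le (hw e (mem_edgeFinset.mp he)) (h e (mem_edgeFinset.mp he))

lemma pathDist_add_le_max {w : Sym2 T.V → ℝ} (hw : T.IsEdgeWeighting w) (P Q R S : T.V) :
    T.pathDist w P R + T.pathDist w Q S ≤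
      max (T.pathDist w P Q + T.pathDist w R S) (T.pathDist w P S + T.pathDist w Q R) := by
  by_cases h : ∃ e ∈ T.tree.edgeSet, T.Splits e P Q R S
  · obtain ⟨e, -, he⟩ := h
    have := pathDist_add_le_of_forall_not_splits hw fun e' _ => he.not_splits (e' := e')
    rw [T.pathDist_symm w S Q, T.pathDist_symm w R Q] at this
    exact le_max_of_le_right this
  · push Not at h
    exact le_max_of_le_left (pathDist_add_le_of_forall_not_splits hw h)

/-- The four-point condition: the two largest of the three pair sums agree. -/
lemma pathDist_add_eq_of_lt {w : Sym2 T.V → ℝ} (hw : T.IsEdgeWeighting w) {P Q R S : T.V}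
    (h : T.pathDist w P Q + T.pathDist w R S < T.pathDist w P R + T.pathDist w Q S) :
    T.pathDist w P R + T.pathDist w Q S = T.pathDist w P S + T.pathDist w Q R := by
  have h₁ := pathDist_add_le_max hw P Q R S
  have h₂ := pathDist_add_le_max hw P Q S R
  rw [T.pathDist_symm w S R] at h₂
  rcases le_max_iff.mp h₁ with h₁ | h₁ <;> rcases le_max_iff.mp h₂ with h₂ | h₂ <;> linarith

/-- The witness is the edge by which the path from `Q` to `A` leaves the path `Q – B`; each of
its ends has a second neighbour on one of the three paths, so is not a leaf. -/
lemma exists_interior_splits {A P Q B : T.V} (hAP : A ≠ P) (hQB : Q ≠ B)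
    (hdisj : ∀ v ∈ (T.treePath A P).support, v ∉ (T.treePath Q B).support) :
    ∃ e ∈ T.tree.edgeSet, (∀ v ∈ e, T.IsInterior v) ∧ T.Splits e A P Q B := by
  classical
  obtain ⟨⟨⟨t, c⟩, htc⟩, hd, ht, hc⟩ := (T.treePath Q A).exists_boundary_dart
    {v | v ∈ (T.treePath Q B).support} (start_mem_support _) (hdisj A (start_mem_support _))
  change T.tree.Adj t c at htc
  change t ∈ (T.treePath Q B).support at ht
  change c ∉ (T.treePath Q B).support at hc
  have he : s(t, c) ∈ (T.treePath Q A).edges := List.mem_map_of_mem (f := Dart.edge) hd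
  refine ⟨s(t, c), htc, ?_, ?_, ?_, fun h => mem_treePath_edges_iff.mp he h.symm⟩
  · intro v hv
    rcases Sym2.mem_iff.mp hv with rfl | rfl
    · obtain ⟨y, hy, hvy⟩ := (T.treePath Q B).exists_adj_mem_support hQB ht
      exact isInterior_of_adj_of_adj htc hvy fun h => hc (h ▸ hy)
    · by_cases hvA : v = A
      · rw [hvA] at htc ⊢
        obtain ⟨y, hy, hAy⟩ := (T.treePath A P).exists_adj_mem_support hAP (start_mem_support _)
        exact isInterior_of_adj_of_adj htc.symm hAy fun h => hdisj y hy (h ▸ ht)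
      · have hQv : Q ≠ v := fun h => hc (h ▸ start_mem_support _)
        obtain ⟨y, z, hy, hz, hyz⟩ := (T.treePath_isPath Q A).exists_adj_adj_ne
          ((T.treePath Q A).snd_mem_support_of_mem_edges he) hQv hvA
        exact isInterior_of_adj_of_adj hy hz hyz
  · exact sameSide_of_notMem_edges _ fun h =>
      hdisj t ((T.treePath A P).fst_mem_support_of_mem_edges h) ht
  · exact sameSide_of_notMem_edges _ fun h =>
      hc ((T.treePath Q B).snd_mem_support_of_mem_edges h)

lemma not_splits_of_disjoint {A P Q B : T.V}
    (hdisj : ∀ v ∈ (T.treePath A P).support, v ∉ (T.treePath Q B).support) (e : Sym2 T.V) :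
    ¬ T.Splits e A Q P B := by
  rintro ⟨hAQ, hPB, hAP⟩
  have hQB : ¬ T.SameSide e Q B := fun h => hAP (hAQ.trans (h.trans hPB.symm))
  rw [← mem_treePath_edges_iff] at hAP hQB
  induction e with
  | h a b =>
    exact hdisj a ((T.treePath A P).fst_mem_support_of_mem_edges hAP)
      ((T.treePath Q B).fst_mem_support_of_mem_edges hQB)

lemma pathDist_add_lt_of_disjoint {w : Sym2 T.V → ℝ} (hw : T.IsProperWeighting w)
    {A P Q B : T.V} (hAP : A ≠ P) (hQB : Q ≠ B)
    (hdisj : ∀ v ∈ (T.treePath A P).support, v ∉ (T.treePath Q B).support) :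
    T.pathDist w A P + T.pathDist w Q B < T.pathDist w A Q + T.pathDist w P B := by
  classical
  have := T.fintypeV
  obtain ⟨e, he, hint, hAP', hQB', hAQ⟩ := exists_interior_splits hAP hQB hdisj
  have hPB : ¬ T.SameSide e P B := fun h => hAQ (hAP'.trans (h.trans hQB'.symm))
  simp only [pathDist_eq_sum_cutWeight, ← Finset.sum_add_distrib]
  refine Finset.sum_lt_sum (fun e' he' => cutWeight_add_le (hw.1 e' (mem_edgeFinset.mp he'))
    (not_splits_of_disjoint hdisj e')) ⟨e, mem_edgeFinset.mpr he, ?_⟩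
  have := hw.2 e he hint
  simp only [cutWeight, if_pos hAP', if_pos hQB', if_neg hAQ, if_neg hPB]
  linarith

lemma pathDist_add_lt_of_quartet {w : Sym2 T.V → ℝ} (hw : T.IsProperWeighting w)
    {a p q b : α} (h : Quartet T a p q b) :
    T.pathDist w (T.ι a) (T.ι p) + T.pathDist w (T.ι q) (T.ι b) <
      T.pathDist w (T.ι a) (T.ι q) + T.pathDist w (T.ι p) (T.ι b) := by
  obtain ⟨ha, hp, hq, hb, hne, hdisj⟩ := h
  simp only [List.pairwise_cons, List.mem_cons, List.not_mem_nil] at hne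
  exact pathDist_add_lt_of_disjoint hw (fun h => hne.1 p (by simp) (T.ι_injOn ha hp h))
    (fun h => hne.2.2.1 b (by simp) (T.ι_injOn hq hb h))
    (hdisj _ _ (T.treePath_isPath _ _) (T.treePath_isPath _ _))

lemma cordDist_mk (w : Sym2 T.V → ℝ) (a b : α) :
    T.cordDist w s(a, b) = T.pathDist w (T.ι a) (T.ι b) := rfl

variable (T) in
def IsQuartetClosed (C : Set (Sym2 α)) : Prop :=
  ∀ a b p q, Quartet T a p q b →
    (∀ c ∈ [s(a, p), s(a, q), s(b, p), s(b, q), s(p, q)], c ∈ C) → s(a, b) ∈ C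

lemma IsShellableOrdering.cords_subset {L C : Set (Sym2 α)} {ord : List (Sym2 α)}
    (hord : IsShellableOrdering T L ord) (hL : L ⊆ C) (hC : IsQuartetClosed T C) :
    cords X ⊆ C := by
  obtain ⟨-, hmem, hpiv⟩ := hord
  have hget : ∀ i (h : i < ord.length), ord.get ⟨i, h⟩ ∈ C := by
    intro i
    induction i using Nat.strong_induction_on with
    | _ i ih =>
      intro h
      obtain ⟨a, b, p, q, hc, hq, hpivots⟩ := hpiv i h
      rw [hc]
      refine hC a b p q hq fun c hc' => (hpivots c hc').elim (@hL c) fun htake => ?_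
      obtain ⟨j, hj, rfl⟩ := List.mem_take_iff_getElem.mp htake
      exact ih j (lt_min_iff.mp hj).1 _
  intro c hc
  by_cases hcL : c ∈ L
  · exact hL hcL
  · obtain ⟨⟨i, h⟩, rfl⟩ := List.mem_iff_get.mp ((hmem c).mpr ⟨hc, hcL⟩)
    exact hget i h

variable {S S' : Set (Sym2 α) × (Sym2 α → ℝ)}

lemma RStep.fst_subset {Xs : Set α} (h : RStep Xs S S') : S.1 ⊆ S'.1 := by
  obtain ⟨_, _, _, _, -, -, -, -, -, -, -, -, -, -, -, -, h₁, -⟩ := h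
  exact h₁ ▸ Set.subset_insert _ _

lemma RStep.fst_subset_cords (h : RStep X S S') (hS : S.1 ⊆ cords X) : S'.1 ⊆ cords X := by
  obtain ⟨x, _, _, z, hx, -, -, hz, hne, -, -, -, -, -, -, -, h₁, -⟩ := h
  simp only [List.pairwise_cons, List.mem_cons, List.not_mem_nil] at hne
  rw [h₁]
  refine Set.insert_subset ⟨fun hxz => hne.1 z (by simp) (Sym2.mk_isDiag_iff.mp hxz), ?_⟩ hS
  rintro a ha
  rcases Sym2.mem_iff.mp ha with rfl | rfl
  exacts [hx, hz]

lemma RStep.snd_eq_cordDist {w : Sym2 T.V → ℝ} (hw : T.IsEdgeWeighting w)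
    (h : RStep X S S') (hS : S.2 = T.cordDist w) : S'.2 = T.cordDist w := by
  classical
  obtain ⟨x, y, u, z, -, -, -, -, -, -, -, -, -, -, -, hlt, -, h₂⟩ := h
  simp only [hS, cordDist_mk] at hlt h₂
  rw [h₂, Function.update_eq_self_iff, cordDist_mk]
  linarith [pathDist_add_eq_of_lt hw hlt, T.pathDist_symm w (T.ι y) (T.ι u)]

lemma RStep.reflTransGen_invariant {w : Sym2 T.V → ℝ} (hw : T.IsEdgeWeighting w)
    {L : Set (Sym2 α)} (hLX : L ⊆ cords X)
    (h : Relation.ReflTransGen (RStep X) (L, T.cordDist w) S) :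
    L ⊆ S.1 ∧ S.1 ⊆ cords X ∧ S.2 = T.cordDist w := by
  induction h with
  | refl => exact ⟨subset_rfl, hLX, rfl⟩
  | tail _ hstep ih =>
    exact ⟨ih.1.trans hstep.fst_subset, hstep.fst_subset_cords ih.2.1,
      hstep.snd_eq_cordDist hw ih.2.2⟩

lemma isQuartetClosed_of_forall_not_rStep {w : Sym2 T.V → ℝ} (hw : T.IsProperWeighting w)
    (hS : S.2 = T.cordDist w) (hmax : ∀ S', ¬ RStep X S S') : IsQuartetClosed T S.1 := by
  intro a b p q hq hpiv
  simp only [List.mem_cons, List.not_mem_nil, or_false, forall_eq_or_imp, forall_eq] at hpiv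
  obtain ⟨hap, haq, hbp, hbq, hpq⟩ := hpiv
  by_contra hab
  refine hmax (_, _) ⟨a, p, q, b, hq.1, hq.2.1, hq.2.2.1, hq.2.2.2.1, hq.2.2.2.2.1, hap, hpq,
    Sym2.eq_swap ▸ hbp, haq, Sym2.eq_swap ▸ hbq, hab, ?_, rfl, rfl⟩
  rw [hS]
  exact pathDist_add_lt_of_quartet hw hq

end XTree

open XTree in
theorem clR_eq_cords_of_contains_shellable_general {α : Type} (X : Set α) (T : XTree α X)
    (w : Sym2 T.V → ℝ) (hw : T.IsProperWeighting w)
    (L : Set (Sym2 α)) (hLX : L ⊆ cords X)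
    (hcontains : ∃ L₀ ⊆ L, IsShellableLasso T L₀) :
    ∀ S : Set (Sym2 α) × (Sym2 α → ℝ),
      IsRClosureOf X L (T.cordDist w) S → S.1 = cords X := by
  rintro S ⟨hreach, hmax⟩
  obtain ⟨hLS, hScords, hSd⟩ := RStep.reflTransGen_invariant hw.1 hLX hreach
  obtain ⟨L₀, hL₀L, -, -, ord, hord⟩ := hcontains
  exact hScords.antisymm <|
    hord.cords_subset (hL₀L.trans hLS) (isQuartetClosed_of_forall_not_rStep hw hSd hmax)

open XTree in
/-- Let `T` be a fully-resolved `X`-tree, `w` a proper edge-weighting and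
`d = d_{(T,w)}`. If `L ⊆ binom(X,2)` contains a shellable lasso for `T`, then
`cl_R(L) = binom(X,2)`: exhaustively applying the extension rule (R) starting from the
values of `d` on `L` eventually assigns a `d`-value to every cord of `X`. -/
theorem clR_eq_cords_of_contains_shellable {α : Type} (X : Set α) (hfin : X.Finite)
    (hcard : 3 ≤ X.ncard) (T : XTree α X) (hT : T.IsFullyResolved)
    (w : Sym2 T.V → ℝ) (hw : T.IsProperWeighting w)
    (L : Set (Sym2 α)) (hLX : L ⊆ cords X)
    (hcontains : ∃ L₀ ⊆ L, IsShellableLasso T L₀) :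
    ∀ S : Set (Sym2 α) × (Sym2 α → ℝ),
      IsRClosureOf X L (T.cordDist w) S → S.1 = cords X :=
  clR_eq_cords_of_contains_shellable_general X T w hw L hLX hcontains
end

section
/- Let T be a fully-resolved X-tree, let w be a proper edge-weighting of T, and let L ⊆ binom(X,2). If the initial function d agrees with d_{(T,w)} on every cord of L, then at every stage of repeated application of the extension rule (R) the extended function d agrees with d_{(T,w)} on every cord so far added; in particular the extension of d to cl_R(L) equals the restriction of d_{(T,w)} to cl_R(L). -/
open SimpleGraph

/-!
In a tree, `d(p, q)` is the sum of the weights of the edges whose removal separates `p` from `q`.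
Each edge contributes equally to the three sums `d(x,y) + d(u,z)`, `d(x,u) + d(y,z)`,
`d(x,z) + d(y,u)`, unless it splits `{x, y, u, z}` into two pairs; then it contributes nothing
to the sum matching that split and `2 w(e)` to the other two. Two edges of a graph never split
the same four vertices into pairs in two different ways. Hence if
`d(x,y) + d(u,z) < d(x,u) + d(y,z)`, some edge splits `xy | uz`, no edge splits `xu | yz` or
`xz | yu`, and `d(x,u) + d(y,z) = d(x,z) + d(y,u)`: rule (R) assigns to `xz` its tree distance.
-/

namespace SimpleGraph

variable {V : Type*} {G : SimpleGraph V}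

abbrev SameSide (G : SimpleGraph V) (e : Sym2 V) (p q : V) : Prop :=
  (G.deleteEdges {e}).Reachable p q

def SeparatesPairs (G : SimpleGraph V) (e : Sym2 V) (x y u z : V) : Prop :=
  G.SameSide e x y ∧ G.SameSide e u z ∧ ¬ G.SameSide e x u

lemma Walk.sameSide_left_or_right {v a : V} (b : V) (p : G.Walk v a) :
    G.SameSide s(a, b) v a ∨ G.SameSide s(a, b) v b := by
  induction p with
  | nil => exact .inl .rfl
  | @cons v v' a hadj p ih =>
    by_cases he : s(v, v') = s(a, b)
    · rcases Sym2.eq_iff.mp he with ⟨rfl, -⟩ | ⟨rfl, -⟩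
      · exact .inl .rfl
      · exact .inr .rfl
    · have hadj' : (G.deleteEdges {s(a, b)}).Adj v v' := by simpa [hadj] using he
      exact ih.imp hadj'.reachable.trans hadj'.reachable.trans

lemma SameSide.sameSide_of_not_sameSide_of_mem {e f : Sym2 V} {p q c : V}
    (hpq : G.SameSide e p q) (hpc : ¬ G.SameSide e p c) (hc : c ∈ f) : G.SameSide f p q := by
  classical
  obtain ⟨W⟩ := hpq
  have hcW : c ∉ W.support := fun h => hpc ⟨W.takeUntil c h⟩
  refine ⟨W.transfer _ fun e' he' => ?_⟩
  have he'G := W.edges_subset_edgeSet he'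
  simp only [edgeSet_deleteEdges, Set.mem_sdiff, Set.mem_singleton_iff] at he'G ⊢
  exact ⟨he'G.1, fun hf => hcW (W.mem_support_of_mem_edges he' (hf ▸ hc))⟩

lemma SeparatesPairs.swap_right {e : Sym2 V} {x y u z : V} (h : G.SeparatesPairs e x y u z) :
    G.SeparatesPairs e x y z u :=
  ⟨h.1, h.2.1.symm, fun hxz => h.2.2 (hxz.trans h.2.1.symm)⟩

lemma SeparatesPairs.not_separatesPairs {e f : Sym2 V} {x y u z : V}
    (h : G.SeparatesPairs e x y u z) : ¬ G.SeparatesPairs f x u y z := by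
  obtain ⟨hxy, huz, hxu⟩ := h
  rintro ⟨hxu', hyz', hxy'⟩
  obtain ⟨c, hc⟩ : ∃ c, c ∈ f := f.ind fun c _ => ⟨c, Sym2.mem_mk_left _ _⟩
  by_cases hxc : G.SameSide e x c
  · have huc : ¬ G.SameSide e u c := fun h => hxu (hxc.trans h.symm)
    exact hxy' (hxu'.trans ((huz.sameSide_of_not_sameSide_of_mem huc hc).trans hyz'.symm))
  · exact hxy' (hxy.sameSide_of_not_sameSide_of_mem hxc hc)

lemma IsTree.exists_sameSide_iff (hG : G.IsTree) {e : Sym2 V} (he : e ∈ G.edgeSet) :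
    ∃ s : V → Prop, ∀ p q, G.SameSide e p q ↔ (s p ↔ s q) := by
  induction e using Sym2.ind with
  | _ a b =>
  have hab : ¬ G.SameSide s(a, b) a b := isAcyclic_iff_forall_isBridge.mp hG.isAcyclic he
  have hside (p : V) : G.SameSide s(a, b) p a ∨ G.SameSide s(a, b) p b :=
    (hG.connected.preconnected p a).some.sameSide_left_or_right b
  refine ⟨fun p => G.SameSide s(a, b) p a,
    fun p q => ⟨fun h => ⟨h.symm.trans, h.trans⟩, ?_⟩⟩
  intro hpq
  rcases hside p with hpa | hpb
  · exact hpa.trans (hpq.mp hpa).symm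
  · rcases hside q with hqa | hqb
    · exact absurd (hpq.mpr hqa) fun hpa => hab (hpa.symm.trans hpb)
    · exact hpb.trans hqb.symm

lemma IsTree.mem_edges_iff_not_sameSide (hG : G.IsTree) {u v : V} {p : G.Walk u v}
    (hp : p.IsPath) {e : Sym2 V} : e ∈ p.edges ↔ ¬ G.SameSide e u v := by
  classical
  induction e using Sym2.ind with
  | _ a b =>
  rw [SameSide, reachable_deleteEdges_iff_exists_walk]
  refine ⟨fun he ⟨W, hW⟩ => hW (W.edges_bypass_subset_edges ?_),
    fun h => by_contra fun he => h ⟨p, he⟩⟩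
  rwa [(hG.existsUnique_path u v).unique W.bypass_isPath hp]

open Classical in
noncomputable def cutWeight (G : SimpleGraph V) (w : Sym2 V → ℝ) (e : Sym2 V) (p q : V) : ℝ :=
  if G.SameSide e p q then 0 else w e

noncomputable def cutDist (G : SimpleGraph V) [Fintype G.edgeSet] (w : Sym2 V → ℝ)
    (p q : V) : ℝ :=
  ∑ e ∈ G.edgeFinset, G.cutWeight w e p q

lemma IsTree.sum_map_edges_eq_cutDist [Fintype G.edgeSet] (hG : G.IsTree) (w : Sym2 V → ℝ)
    {u v : V} {p : G.Walk u v} (hp : p.IsPath) :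
    (p.edges.map w).sum = G.cutDist w u v := by
  classical
  have hsub : p.edges.toFinset ⊆ G.edgeFinset := fun e he =>
    mem_edgeFinset.mpr (p.edges_subset_edgeSet (List.mem_toFinset.mp he))
  rw [← List.sum_toFinset w hp.isTrail.edges_nodup, ← Finset.inter_eq_right.mpr hsub,
    ← Finset.sum_ite_mem]
  simp only [cutDist, cutWeight, List.mem_toFinset, hG.mem_edges_iff_not_sameSide hp, ite_not]

lemma IsTree.separatesPairs_of_cutWeight_lt (hG : G.IsTree) {w : Sym2 V → ℝ} {e : Sym2 V}
    (he : e ∈ G.edgeSet) (hw : 0 ≤ w e) {x y u z : V}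
    (h : G.cutWeight w e x y + G.cutWeight w e u z < G.cutWeight w e x u + G.cutWeight w e y z) :
    G.SeparatesPairs e x y u z := by
  obtain ⟨s, hs⟩ := hG.exists_sameSide_iff he
  simp only [SeparatesPairs, cutWeight, hs] at h ⊢
  by_cases s x <;> by_cases s y <;> by_cases s u <;> by_cases s z <;> simp_all <;> linarith

lemma IsTree.cutWeight_add_eq_of_not_separatesPairs (hG : G.IsTree) (w : Sym2 V → ℝ)
    {e : Sym2 V} (he : e ∈ G.edgeSet) {x y u z : V} (hxu : ¬ G.SeparatesPairs e x u y z)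
    (hxz : ¬ G.SeparatesPairs e x z y u) :
    G.cutWeight w e x u + G.cutWeight w e y z = G.cutWeight w e x z + G.cutWeight w e y u := by
  obtain ⟨s, hs⟩ := hG.exists_sameSide_iff he
  simp only [SeparatesPairs, cutWeight, hs] at hxu hxz ⊢
  by_cases s x <;> by_cases s y <;> by_cases s u <;> by_cases s z <;> simp_all

lemma IsTree.cutDist_add_eq_of_lt [Fintype G.edgeSet] (hG : G.IsTree) {w : Sym2 V → ℝ}
    (hw : ∀ e ∈ G.edgeSet, 0 ≤ w e) {x y u z : V}
    (h : G.cutDist w x y + G.cutDist w u z < G.cutDist w x u + G.cutDist w y z) :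
    G.cutDist w x u + G.cutDist w y z = G.cutDist w x z + G.cutDist w y u := by
  simp only [cutDist, ← Finset.sum_add_distrib] at h ⊢
  obtain ⟨e₀, he₀, hlt⟩ := Finset.exists_lt_of_sum_lt h
  have hsplit := hG.separatesPairs_of_cutWeight_lt (mem_edgeFinset.mp he₀)
    (hw e₀ (mem_edgeFinset.mp he₀)) hlt
  exact Finset.sum_congr rfl fun e he =>
    hG.cutWeight_add_eq_of_not_separatesPairs w (mem_edgeFinset.mp he)
    hsplit.not_separatesPairs hsplit.swap_right.not_separatesPairs

end SimpleGraph

namespace XTree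

variable {α : Type} {X : Set α}

lemma cordDist_add_eq_of_lt (T : XTree α X) {w : Sym2 T.V → ℝ} (hw : T.IsEdgeWeighting w)
    {x y u z : α} (h : T.cordDist w s(x, y) + T.cordDist w s(u, z) <
      T.cordDist w s(x, u) + T.cordDist w s(y, z)) :
    T.cordDist w s(x, u) + T.cordDist w s(y, z) = T.cordDist w s(x, z) + T.cordDist w s(y, u) := by
  classical
  let _ : Fintype T.V := T.fintypeV
  have hcut (a b : α) : T.cordDist w s(a, b) = T.tree.cutDist w (T.ι a) (T.ι b) :=
    T.isTree.sum_map_edges_eq_cutDist w (T.treePath_isPath _ _)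
  simp only [hcut] at h ⊢
  exact T.isTree.cutDist_add_eq_of_lt hw h

lemma RStep.eqOn {Xs : Set α} {S S' : Set (Sym2 α) × (Sym2 α → ℝ)} {D : Sym2 α → ℝ}
    (hD : ∀ x y u z, D s(x, y) + D s(u, z) < D s(x, u) + D s(y, z) →
      D s(x, u) + D s(y, z) = D s(x, z) + D s(y, u))
    (h : RStep Xs S S') (hS : Set.EqOn S.2 D S.1) : Set.EqOn S'.2 D S'.1 := by
  classical
  obtain ⟨x, y, u, z, -, -, -, -, -, hxy, hyu, hyz, hxu, huz, hxz, hlt, h₁, h₂⟩ := h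
  rw [h₁, h₂]
  rintro c (rfl | hc)
  · rw [hS hxy, hS huz, hS hxu, hS hyz] at hlt
    rw [Function.update_self, hS hxu, hS hyz, hS hyu]
    linarith [hD x y u z hlt]
  · rw [Function.update_of_ne (ne_of_mem_of_not_mem hc hxz)]
    exact hS hc

end XTree

open XTree in
theorem clR_values_agree_general {α : Type} (X : Set α) (T : XTree α X)
    (w : Sym2 T.V → ℝ) (hw : T.IsProperWeighting w)
    (L : Set (Sym2 α))
    (d : Sym2 α → ℝ) (hd : ∀ c ∈ L, d c = T.cordDist w c) :
    ∀ S : Set (Sym2 α) × (Sym2 α → ℝ),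
      Relation.ReflTransGen (RStep X) (L, d) S →
        ∀ c ∈ S.1, S.2 c = T.cordDist w c := by
  intro S hS
  induction hS with
  | refl => exact hd
  | tail _ hstep ih => exact hstep.eqOn (fun _ _ _ _ => T.cordDist_add_eq_of_lt hw.1) ih

open XTree in
/-- Let `T` be a fully-resolved `X`-tree with proper edge-weighting `w`,
and `L ⊆ binom(X,2)`. If the initial function `d` agrees with `d_{(T,w)}` on every cord
of `L`, then at every stage of repeated application of the extension rule (R) the
extended function agrees with `d_{(T,w)}` on every cord so far added; in particular the
extension of `d` to `cl_R(L)` equals the restriction of `d_{(T,w)}` to `cl_R(L)`. -/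
theorem clR_values_agree {α : Type} (X : Set α) (hfin : X.Finite)
    (hcard : 3 ≤ X.ncard) (T : XTree α X) (hT : T.IsFullyResolved)
    (w : Sym2 T.V → ℝ) (hw : T.IsProperWeighting w)
    (L : Set (Sym2 α)) (hLX : L ⊆ cords X)
    (d : Sym2 α → ℝ) (hd : ∀ c ∈ L, d c = T.cordDist w c) :
    ∀ S : Set (Sym2 α) × (Sym2 α → ℝ),
      Relation.ReflTransGen (RStep X) (L, d) S →
        ∀ c ∈ S.1, S.2 c = T.cordDist w c :=
  clR_values_agree_general X T w hw L d hd
end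

section
/- Let T be a fully-resolved X-tree with |X| ≥ 4, let L = L_{(T,f)} be a stable triplet cover of T generated by a stable transversal f of clus(T), let x, y be a cherry of T with f({x,y}) = x, let z := f(X − {x,y}), X' := X − {y}, T' := T|X' and L' := L − {xy, yz}. Let v be the interior vertex of T adjacent to x and y, let u be the interior vertex adjacent to v, and let X_2 and X_3 be the leaf sets of the two components of T − u not containing x and y, labelled so that z ∈ X_3. Then any ordering of binom(X,2) − L that begins with a shellable ordering of binom(X',2) − L' (with respect to T'), followed by the cords ty with t ∈ X_2 in any order, followed by the cords ty with t ∈ X_3 − {z} in any order, is a shellable ordering of binom(X,2) − L with respect to T. -/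
/-!
The cords of `L` through `y` are only `xy` and `yz`: a cluster `A` with `f(A) = y` other than
`{y}` contains `{x, y}`, and stability would give `f(A) = f({x, y}) = x`. Every other cord `ty`
(`t ≠ x, z`) is shelled with the pivots `z` and `x`. Indeed `X - {x, y}` is a cluster containing
`t` and `z`, so `T|{t, z, x, y} = tz||xy`; among the other cords on `{t, y, z, x}`, the cords
`xy, yz, xz` lie in `L`, while `tz` and `tx` avoid `y` and so lie in `L'` or already occur in the
shelling of `T'`. In particular the order of the cords `ty` plays no role. The shelling of `T'` is
one of `T` because a quartet `ab||cd` amounts to a cluster separating `{a, b}` from `{c, d}`, and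
the clusters of `T'` are restrictions of clusters of `T`.
-/

open SimpleGraph

namespace SimpleGraph

variable {V : Type*} {G : SimpleGraph V}

lemma Walk.IsTrail.reachable_deleteEdges_or {u v w : V} {p : G.Walk u v} (hp : p.IsTrail)
    (hw : w ∈ p.support) (e : Sym2 V) :
    (G.deleteEdges {e}).Reachable u w ∨ (G.deleteEdges {e}).Reachable v w := by
  classical
  by_contra! h
  exact hp.disjoint_edges_takeUntil_dropUntil hw
    ((p.takeUntil w hw).mem_edges_of_not_reachable_deleteEdges h.1)
    (by simpa using (p.dropUntil w hw).reverse.mem_edges_of_not_reachable_deleteEdges h.2)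

lemma Walk.reachable_deleteEdges_of_notMem_support {s t w : V} (p : G.Walk s t)
    (hw : w ∉ p.support) (n : V) : (G.deleteEdges {s(w, n)}).Reachable s t :=
  reachable_deleteEdges_iff_exists_walk.mpr ⟨p, fun he => hw (p.fst_mem_support_of_mem_edges he)⟩

lemma Walk.reachable_deleteEdges_of_mem_support {s t w m m' : V} (p : G.Walk s t)
    (he : s(m, m') ∉ p.edges) (hw : w ∈ p.support) : (G.deleteEdges {s(m, m')}).Reachable s w := by
  classical
  exact reachable_deleteEdges_iff_exists_walk.mpr
    ⟨p.takeUntil w hw, fun h => he (p.edges_takeUntil_subset_edges hw h)⟩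

lemma IsAcyclic.not_reachable_deleteEdges (hG : G.IsAcyclic) {v w : V} (h : G.Adj v w) :
    ¬ (G.deleteEdges {s(v, w)}).Reachable v w :=
  isAcyclic_iff_forall_adj_isBridge.mp hG h

lemma IsAcyclic.reachable_deleteEdges_iff_exists_walk_avoiding (hG : G.IsAcyclic) {w n s : V}
    (h : G.Adj w n) :
    (G.deleteEdges {s(w, n)}).Reachable s n ↔ ∃ p : G.Walk s n, w ∉ p.support := by
  classical
  constructor
  · rintro ⟨p⟩
    refine ⟨p.mapLe (G.deleteEdges_le _), fun hw => ?_⟩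
    rw [Walk.support_mapLe_eq_support] at hw
    exact hG.not_reachable_deleteEdges h ⟨p.dropUntil w hw⟩
  · rintro ⟨p, hp⟩
    exact p.reachable_deleteEdges_of_notMem_support hp n

lemma Reachable.exists_adj_walk_notMem_support {s w : V} (h : G.Reachable w s) (hne : w ≠ s) :
    ∃ n, G.Adj w n ∧ ∃ p : G.Walk s n, w ∉ p.support := by
  obtain ⟨p, hp⟩ := h.exists_isPath
  cases p with
  | nil => exact absurd rfl hne
  | cons hadj q =>
    exact ⟨_, hadj, q.reverse, by
      simpa using ((Walk.cons_isPath_iff hadj q).mp hp).2⟩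

lemma Walk.eq_of_notMem_support {s t w : V} (hs : ∀ c, G.Adj s c → c = w) (p : G.Walk s t)
    (hw : w ∉ p.support) : s = t := by
  cases p with
  | nil => rfl
  | cons h q =>
    rw [Walk.support_cons, List.mem_cons, not_or, ← hs _ h] at hw
    exact absurd q.start_mem_support hw.2

lemma Walk.exists_prefix_outside_adj_mem {s t : V} (S : Set V) (p : G.Walk s t) (hs : s ∉ S)
    (ht : t ∈ S) :
    ∃ m' m, G.Adj m' m ∧ m ∈ S ∧ ∃ q : G.Walk s m', ∀ c ∈ q.support, c ∉ S := by
  induction p with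
  | nil => exact absurd ht hs
  | @cons a b c h q ih =>
    by_cases hb : b ∈ S
    · exact ⟨a, b, h, hb, Walk.nil, by simpa using hs⟩
    · obtain ⟨m', m, hadj, hm, q', hq'⟩ := ih hb ht
      exact ⟨m', m, hadj, hm, Walk.cons h q', by simp_all⟩

end SimpleGraph

namespace XTree

variable {α : Type} {X : Set α}

section

variable (T : XTree α X)

lemma eq_of_adj_ι {a : α} (ha : a ∈ X) {n c : T.V} (hn : T.tree.Adj (T.ι a) n)
    (hc : T.tree.Adj (T.ι a) c) : c = n := by
  obtain ⟨d, hd⟩ := Set.ncard_eq_one.mp ((T.leaf_iff (T.ι a)).mpr ⟨a, ha, rfl⟩)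
  exact (Set.subsingleton_singleton (a := d)) (hd ▸ hc) (hd ▸ hn)

lemma three_le_ncard_neighborSet {w a b c : T.V} (ha : T.tree.Adj w a) (hb : T.tree.Adj w b)
    (hc : T.tree.Adj w c) (hab : a ≠ b) (hac : a ≠ c) (hbc : b ≠ c) :
    3 ≤ (T.tree.neighborSet w).ncard := by
  have := T.fintypeV
  calc 3 = ({a, b, c} : Set T.V).ncard :=
        (Set.ncard_eq_three.mpr ⟨a, b, c, hab, hac, hbc, rfl⟩).symm
    _ ≤ _ := Set.ncard_le_ncard (by simp [Set.insert_subset_iff, ha, hb, hc]) (Set.toFinite _)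

lemma isInterior_of_adj₃ {w a b c : T.V} (ha : T.tree.Adj w a) (hb : T.tree.Adj w b)
    (hc : T.tree.Adj w c) (hab : a ≠ b) (hac : a ≠ c) (hbc : b ≠ c) : T.IsInterior w := by
  intro hw
  have := T.three_le_ncard_neighborSet ha hb hc hab hac hbc
  rw [(T.leaf_iff w).mpr hw] at this
  omega

lemma neighborSet_eq_of_adj₃ (hT : T.IsFullyResolved) {w a b c : T.V} (ha : T.tree.Adj w a)
    (hb : T.tree.Adj w b) (hc : T.tree.Adj w c) (hab : a ≠ b) (hac : a ≠ c) (hbc : b ≠ c) :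
    T.tree.neighborSet w = {a, b, c} := by
  have := T.fintypeV
  refine (Set.eq_of_subset_of_ncard_le (by simp [Set.insert_subset_iff, ha, hb, hc]) ?_
    (Set.toFinite _)).symm
  rw [hT w (T.isInterior_of_adj₃ ha hb hc hab hac hbc),
    Set.ncard_eq_three.mpr ⟨a, b, c, hab, hac, hbc, rfl⟩]

lemma ι_ne_of_isInterior {w : T.V} (hw : T.IsInterior w) {a : α} (ha : a ∈ X) : T.ι a ≠ w :=
  fun h => hw ⟨a, ha, h⟩

lemma compSet_eq_sideSet {w n : T.V} (h : T.tree.Adj w n) :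
    T.compSet w n = T.sideSet s(w, n) n := by
  ext a
  simp only [compSet, sideSet, Set.mem_ofPred_eq,
    T.isTree.isAcyclic.reachable_deleteEdges_iff_exists_walk_avoiding h]

lemma compSet_mem_clus {w n : T.V} (h : T.tree.Adj w n) : T.compSet w n ∈ clus T :=
  ⟨s(w, n), h, n, Sym2.mem_mk_right _ _, T.compSet_eq_sideSet h⟩

lemma disjoint_compSet {w n₁ n₂ : T.V} (h₁ : T.tree.Adj w n₁) (h₂ : T.tree.Adj w n₂)
    (hne : n₁ ≠ n₂) : Disjoint (T.compSet w n₁) (T.compSet w n₂) := by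
  refine Set.disjoint_left.mpr fun a ⟨_, p₁, hp₁⟩ ha₂ => ?_
  have hn₂ := (T.compSet_eq_sideSet h₂ ▸ ha₂).2
  have hn₁w : (T.tree.deleteEdges {s(w, n₂)}).Adj n₁ w := by
    simp [h₁.symm, hne, h₁.ne']
  exact T.isTree.isAcyclic.not_reachable_deleteEdges h₂
    (hn₁w.reachable.symm.trans ((p₁.reachable_deleteEdges_of_notMem_support hp₁ n₂).symm.trans hn₂))

lemma disjoint_compSet_swap {u v : T.V} (h : T.tree.Adj u v) :
    Disjoint (T.compSet u v) (T.compSet v u) := by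
  refine Set.disjoint_left.mpr fun a ⟨_, p, hp⟩ hav => ?_
  have hu := (T.compSet_eq_sideSet h.symm ▸ hav).2
  rw [Sym2.eq_swap] at hu
  exact T.isTree.isAcyclic.not_reachable_deleteEdges h
    (hu.symm.trans (p.reachable_deleteEdges_of_notMem_support hp v))

lemma compSet_ι_of_adj {a : α} (ha : a ∈ X) {w : T.V} (h : T.tree.Adj (T.ι a) w) :
    T.compSet w (T.ι a) = {a} := by
  ext b
  constructor
  · rintro ⟨hb, p, hp⟩
    have := p.reverse.eq_of_notMem_support (fun c hc => T.eq_of_adj_ι ha h hc) (by simpa using hp)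
    exact T.ι_injOn hb ha this.symm
  · rintro rfl
    exact ⟨ha, Walk.nil, by simpa using h.ne'⟩

lemma apply_compSet_ι {f : Set α → α} (hf : IsStableTransversal (clus T) f) {a : α}
    (ha : a ∈ X) {w : T.V} (h : T.tree.Adj (T.ι a) w) : f (T.compSet w (T.ι a)) = a := by
  have := hf.1 _ (T.compSet_mem_clus h.symm)
  rw [T.compSet_ι_of_adj ha h] at this ⊢
  exact this

lemma exists_mem_compSet {a : α} (ha : a ∈ X) {w : T.V} (hw : T.ι a ≠ w) :
    ∃ n, T.tree.Adj w n ∧ a ∈ T.compSet w n := by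
  obtain ⟨n, h, p, hp⟩ :=
    (T.isTree.connected.preconnected w (T.ι a)).exists_adj_walk_notMem_support hw.symm
  exact ⟨n, h, ha, p, hp⟩

lemma quartet_of_mem_clus {a p q b : α} (ha : a ∈ X) (hp : p ∈ X) (hq : q ∈ X) (hb : b ∈ X)
    (hdist : List.Pairwise (· ≠ ·) [a, p, q, b]) {B : Set α} (hB : B ∈ clus T) (haB : a ∈ B)
    (hpB : p ∈ B) (hqB : q ∉ B) (hbB : b ∉ B) : Quartet T a p q b := by
  obtain ⟨e, -, m, -, rfl⟩ := hB
  refine ⟨ha, hp, hq, hb, hdist, fun P Q hP hQ w hwP hwQ => ?_⟩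
  have hwm : (T.tree.deleteEdges {e}).Reachable w m := by
    rcases hP.isTrail.reachable_deleteEdges_or hwP e with h | h
    exacts [h.symm.trans haB.2, h.symm.trans hpB.2]
  rcases hQ.isTrail.reachable_deleteEdges_or hwQ e with h | h
  exacts [hqB ⟨hq, h.trans hwm⟩, hbB ⟨hb, h.trans hwm⟩]

end

variable {T : XTree α X}

lemma Quartet.exists_mem_clus {a p q b : α} (h : Quartet T a p q b) :
    ∃ B ∈ clus T, a ∈ B ∧ p ∈ B ∧ q ∉ B ∧ b ∉ B := by
  obtain ⟨ha, hp, hq, hb, -, hdisj⟩ := h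
  set P := T.treePath (T.ι a) (T.ι p)
  set Q := T.treePath (T.ι q) (T.ι b)
  have hPQ := hdisj P Q (T.treePath_isPath _ _) (T.treePath_isPath _ _)
  -- the edge `m'm` through which the path from `q` to `a` first meets `P` separates the quartet
  obtain ⟨m', m, hadj, hm, R, hR⟩ := (T.treePath (T.ι q) (T.ι a)).exists_prefix_outside_adj_mem
    {c | c ∈ P.support} (fun h => hPQ _ h Q.start_mem_support) P.start_mem_support
  have hPe : s(m', m) ∉ P.edges := fun he =>
    hR m' R.end_mem_support (P.fst_mem_support_of_mem_edges he)
  have hQe : s(m', m) ∉ Q.edges := fun he => hPQ m hm (Q.snd_mem_support_of_mem_edges he)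
  have hRe : s(m', m) ∉ R.edges := fun he => hR m (R.snd_mem_support_of_mem_edges he) hm
  have hsep := T.isTree.isAcyclic.not_reachable_deleteEdges hadj
  have hqm' := R.reachable_deleteEdges_of_mem_support hRe R.end_mem_support
  have hbq := (Q.reachable_deleteEdges_of_mem_support hQe Q.end_mem_support).symm
  refine ⟨T.sideSet s(m', m) m, ⟨_, hadj, m, Sym2.mem_mk_right _ _, rfl⟩,
    ⟨ha, P.reachable_deleteEdges_of_mem_support hPe hm⟩,
    ⟨hp, P.reverse.reachable_deleteEdges_of_mem_support (by simpa using hPe) (by simpa using hm)⟩,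
    fun h => hsep (hqm'.symm.trans h.2), fun h => hsep (hqm'.symm.trans (hbq.symm.trans h.2))⟩

lemma Quartet.of_isRestrictionOf {Y : Set α} {T' : XTree α Y} (hT' : IsRestrictionOf T' T)
    {a p q b : α} (h : Quartet T' a p q b) : Quartet T a p q b := by
  obtain ⟨A, hA, haA, hpA, hqA, hbA⟩ := h.exists_mem_clus
  obtain ⟨ha, hp, hq, hb, hdist, -⟩ := h
  rw [hT'.2] at hA
  obtain ⟨⟨B, hB, rfl⟩, -, -⟩ := hA
  exact T.quartet_of_mem_clus (hT'.1 ha) (hT'.1 hp) (hT'.1 hq) (hT'.1 hb) hdist hB haA.1 hpA.1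
    (fun h => hqA ⟨h, hq⟩) (fun h => hbA ⟨h, hb⟩)

lemma HasPivots.of_isRestrictionOf {Y : Set α} {T' : XTree α Y} (hT' : IsRestrictionOf T' T)
    {L : Set (Sym2 α)} {e : List (Sym2 α)} {c : Sym2 α} (h : HasPivots T' L e c) :
    HasPivots T L e c :=
  let ⟨a, b, p, q, hc, hq, hcords⟩ := h
  ⟨a, b, p, q, hc, hq.of_isRestrictionOf hT', hcords⟩

lemma HasPivots.mono {L M : Set (Sym2 α)} {e e' : List (Sym2 α)} {c : Sym2 α}
    (h : HasPivots T L e c) (hL : L ⊆ M) (he : e ⊆ e') : HasPivots T M e' c :=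
  let ⟨a, b, p, q, hc, hq, hcords⟩ := h
  ⟨a, b, p, q, hc, hq, fun c' hc' => (hcords c' hc').imp (@hL c') (@he c')⟩

lemma hasPivots_append {L : Set (Sym2 α)} {ord l : List (Sym2 α)}
    (hord : ∀ i (h : i < ord.length), HasPivots T L (ord.take i) (ord.get ⟨i, h⟩))
    (hl : ∀ c ∈ l, HasPivots T L ord c) (i : ℕ) (h : i < (ord ++ l).length) :
    HasPivots T L ((ord ++ l).take i) ((ord ++ l).get ⟨i, h⟩) := by
  by_cases hi : i < ord.length
  · simpa [List.getElem_append_left hi, List.take_append_of_le_length hi.le] using hord i hi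
  · rw [not_lt] at hi
    refine (hl _ ?_).mono subset_rfl ?_
    · rw [List.get_eq_getElem, List.getElem_append_right hi]
      exact List.getElem_mem _
    · rw [List.take_append, List.take_of_length_le hi]
      exact List.subset_append_left _ _

lemma mk_mem_cords {a b : α} (ha : a ∈ X) (hb : b ∈ X) (hab : a ≠ b) : s(a, b) ∈ cords X :=
  ⟨by simpa using hab, by simp [ha, hb]⟩

lemma mem_cords_sdiff_iff {y x z : α} {L : Set (Sym2 α)} (hy : y ∈ X) (hxy : s(x, y) ∈ L)
    (hyz : s(y, z) ∈ L) (hLy : ∀ c ∈ L, y ∈ c → c = s(x, y) ∨ c = s(y, z)) {c : Sym2 α} :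
    c ∈ cords X \ L ↔
      c ∈ cords (X \ {y}) \ (L \ {s(x, y), s(y, z)}) ∨ ∃ t ∈ X \ {x, y, z}, c = s(t, y) := by
  constructor
  · rintro ⟨hc, hcL⟩
    by_cases hyc : y ∈ c
    · obtain ⟨t, rfl⟩ := Sym2.mem_iff_exists.mp hyc
      refine Or.inr ⟨t, ⟨hc.2 t (Sym2.mem_mk_right _ _), ?_⟩, Sym2.eq_swap⟩
      rintro (rfl | rfl | rfl)
      · exact hcL (Sym2.eq_swap ▸ hxy)
      · exact hc.1 (Sym2.mk_isDiag_iff.mpr rfl)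
      · exact hcL hyz
    · exact Or.inl ⟨⟨hc.1, fun a ha => ⟨hc.2 a ha, fun h => hyc (h ▸ ha)⟩⟩,
        fun h => hcL h.1⟩
  · rintro (⟨hc, hcL'⟩ | ⟨t, ht, rfl⟩)
    · refine ⟨⟨hc.1, fun a ha => (hc.2 a ha).1⟩, fun hcL => hcL' ⟨hcL, ?_⟩⟩
      rintro (rfl | rfl) <;> exact (hc.2 y (by simp)).2 rfl
    · simp only [Set.mem_sdiff, Set.mem_insert_iff, Set.mem_singleton_iff, not_or] at ht
      refine ⟨mk_mem_cords ht.1 hy ht.2.2.1, fun hcL => ?_⟩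
      rcases hLy _ hcL (Sym2.mem_mk_right _ _) with h | h <;> simp_all

lemma Quartet.hasPivots {L : Set (Sym2 α)} {e : List (Sym2 α)} {t z x y : α}
    (hq : Quartet T t z x y) (hxy : s(x, y) ∈ L) (hyz : s(y, z) ∈ L) (hxz : s(x, z) ∈ L)
    (havail : ∀ c ∈ cords (X \ {y}), c ∈ L ∨ c ∈ e) : HasPivots T L e s(t, y) := by
  obtain ⟨htX, hzX, hxX, -, hdist, -⟩ := id hq
  simp only [List.pairwise_cons, List.mem_cons, List.not_mem_nil, or_false, forall_eq_or_imp,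
    forall_eq, List.Pairwise.nil] at hdist
  refine ⟨t, y, z, x, rfl, hq, ?_⟩
  simp only [List.mem_cons, List.not_mem_nil, or_false]
  rintro c (rfl | rfl | rfl | rfl | rfl)
  · exact havail _ (mk_mem_cords ⟨htX, hdist.1.2.2⟩ ⟨hzX, hdist.2.1.2⟩ hdist.1.1)
  · exact havail _ (mk_mem_cords ⟨htX, hdist.1.2.2⟩ ⟨hxX, hdist.2.2.1⟩ hdist.1.2.1)
  · exact Or.inl hyz
  · exact Or.inl (Sym2.eq_swap ▸ hxy)
  · exact Or.inl (Sym2.eq_swap ▸ hxz)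

theorem IsShellableOrdering.append_leaf_cords {y x z : α} {T' : XTree α (X \ {y})}
    {L L' : Set (Sym2 α)} {ord' l : List (Sym2 α)} (hT' : IsRestrictionOf T' T)
    (hord' : IsShellableOrdering T' L' ord') (hy : y ∈ X)
    (hxy : s(x, y) ∈ L) (hyz : s(y, z) ∈ L) (hxz : s(x, z) ∈ L)
    (hLy : ∀ c ∈ L, y ∈ c → c = s(x, y) ∨ c = s(y, z)) (hL' : L' = L \ {s(x, y), s(y, z)})
    (hl : l.Nodup) (hmem : ∀ c, c ∈ l ↔ ∃ t ∈ X \ {x, y, z}, c = s(t, y))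
    (hquart : ∀ t ∈ X \ {x, y, z}, Quartet T t z x y) :
    IsShellableOrdering T L (ord' ++ l) := by
  obtain ⟨hnd', hmem', hpiv'⟩ := hord'
  have hL'L : L' ⊆ L := hL' ▸ Set.sdiff_subset
  have havail : ∀ c ∈ cords (X \ {y}), c ∈ L ∨ c ∈ ord' := fun c hc => by
    by_cases hcL : c ∈ L
    · exact Or.inl hcL
    · exact Or.inr ((hmem' c).2 ⟨hc, fun h => hcL (hL'L h)⟩)
  refine ⟨List.nodup_append.mpr ⟨hnd', hl, ?_⟩, fun c => ?_, hasPivots_append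
    (fun i h => (hpiv' i h).of_isRestrictionOf hT' |>.mono hL'L (List.Subset.refl _)) ?_⟩
  · rintro c hc _ hc' rfl
    obtain ⟨t, -, rfl⟩ := (hmem _).1 hc'
    exact (((hmem' _).1 hc).1.2 y (Sym2.mem_mk_right _ _)).2 rfl
  · rw [List.mem_append, hmem c, hmem' c, hL', mem_cords_sdiff_iff hy hxy hyz hLy]
  · intro c hc
    obtain ⟨t, ht, rfl⟩ := (hmem c).1 hc
    exact (hquart t ht).hasPivots hxy hyz hxz havail

structure CherryAt (T : XTree α X) (x y : α) (v u : T.V) : Prop where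
  mem_left : x ∈ X
  mem_right : y ∈ X
  ne : x ≠ y
  adj_left : T.tree.Adj (T.ι x) v
  adj_right : T.tree.Adj (T.ι y) v
  adj : T.tree.Adj v u
  ne_left : u ≠ T.ι x
  ne_right : u ≠ T.ι y

namespace CherryAt

variable {x y : α} {v u : T.V} (h : T.CherryAt x y v u)
include h

lemma ι_ne : T.ι x ≠ T.ι y := fun e => h.ne (T.ι_injOn h.mem_left h.mem_right e)

lemma isInterior : T.IsInterior v :=
  T.isInterior_of_adj₃ h.adj_left.symm h.adj_right.symm h.adj h.ι_ne h.ne_left.symm h.ne_right.symm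

lemma neighborSet_eq (hT : T.IsFullyResolved) : T.tree.neighborSet v = {T.ι x, T.ι y, u} :=
  T.neighborSet_eq_of_adj₃ hT h.adj_left.symm h.adj_right.symm h.adj h.ι_ne h.ne_left.symm
    h.ne_right.symm

lemma compSet_eq_sdiff (hT : T.IsFullyResolved) : T.compSet v u = X \ {x, y} := by
  ext a
  constructor
  · rintro ⟨ha, p, hp⟩
    refine ⟨ha, ?_⟩
    rintro (rfl | rfl)
    · exact h.ne_left (p.eq_of_notMem_support (fun _ => T.eq_of_adj_ι ha h.adj_left) hp).symm
    · exact h.ne_right (p.eq_of_notMem_support (fun _ => T.eq_of_adj_ι ha h.adj_right) hp).symm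
  · rintro ⟨ha, hxy⟩
    obtain ⟨n, hn, han⟩ := T.exists_mem_compSet ha (T.ι_ne_of_isInterior h.isInterior ha)
    have hn' : n ∈ ({T.ι x, T.ι y, u} : Set T.V) := h.neighborSet_eq hT ▸ hn
    rcases hn' with rfl | rfl | rfl
    · rw [T.compSet_ι_of_adj h.mem_left h.adj_left] at han
      exact absurd (Or.inl han) hxy
    · rw [T.compSet_ι_of_adj h.mem_right h.adj_right] at han
      exact absurd (Or.inr han) hxy
    · exact han

lemma compSet_swap (hT : T.IsFullyResolved) : T.compSet u v = {x, y} := by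
  ext a
  constructor
  · intro ha
    by_contra hxy
    have hvu : a ∈ T.compSet v u := h.compSet_eq_sdiff hT ▸ ⟨ha.1, hxy⟩
    exact Set.disjoint_left.mp (T.disjoint_compSet_swap h.adj.symm) ha hvu
  · rintro (rfl | rfl)
    · exact ⟨h.mem_left, Walk.cons h.adj_left Walk.nil, by simp [h.ne_left, h.adj.ne']⟩
    · exact ⟨h.mem_right, Walk.cons h.adj_right Walk.nil, by simp [h.ne_right, h.adj.ne']⟩

lemma mem_compSet_left {w n : T.V} (hw : w ≠ T.ι x) (hy : y ∈ T.compSet w n)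
    (hn : n ≠ T.ι y) : x ∈ T.compSet w n := by
  obtain ⟨-, p, hp⟩ := hy
  cases p with
  | nil => exact absurd rfl hn
  | cons hadj q =>
    obtain rfl := T.eq_of_adj_ι h.mem_right h.adj_right hadj
    rw [Walk.support_cons, List.mem_cons, not_or] at hp
    exact ⟨h.mem_left, Walk.cons h.adj_left q, by simp [hw, hp.2]⟩

lemma union_compSet_eq (hT : T.IsFullyResolved) {u₂ u₃ : T.V} (hu₂ : T.tree.Adj u u₂)
    (hu₃ : T.tree.Adj u u₃) (h23 : u₂ ≠ u₃) (h2v : u₂ ≠ v) (h3v : u₃ ≠ v) :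
    T.compSet u u₂ ∪ T.compSet u u₃ = X \ {x, y} := by
  have hu : T.tree.neighborSet u = {v, u₂, u₃} :=
    T.neighborSet_eq_of_adj₃ hT h.adj.symm hu₂ hu₃ h2v.symm h3v.symm h23
  have hxy := h.compSet_swap hT
  ext a
  constructor
  · rintro (ha | ha)
    · exact ⟨ha.1, fun hxy' => Set.disjoint_left.mp (T.disjoint_compSet h.adj.symm hu₂ h2v.symm)
        (hxy ▸ hxy') ha⟩
    · exact ⟨ha.1, fun hxy' => Set.disjoint_left.mp (T.disjoint_compSet h.adj.symm hu₃ h3v.symm)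
        (hxy ▸ hxy') ha⟩
  · rintro ⟨ha, hxy'⟩
    have hui : T.IsInterior u :=
      T.isInterior_of_adj₃ h.adj.symm hu₂ hu₃ h2v.symm h3v.symm h23
    obtain ⟨n, hn, han⟩ := T.exists_mem_compSet ha (T.ι_ne_of_isInterior hui ha)
    have hn' : n ∈ ({v, u₂, u₃} : Set T.V) := hu ▸ hn
    rcases hn' with rfl | rfl | rfl
    · exact absurd (hxy ▸ han) hxy'
    · exact Or.inl han
    · exact Or.inr han

lemma eq_ι_right_of_apply_compSet_eq (hT : T.IsFullyResolved) {f : Set α → α}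
    (hf : IsStableTransversal (clus T) f) (hfxy : f {x, y} = x) {w n : T.V} (hw : T.IsInterior w)
    (hn : T.tree.Adj w n) (hfy : f (T.compSet w n) = y) : n = T.ι y := by
  by_contra hne
  have hA := T.compSet_mem_clus hn
  have hyA : y ∈ T.compSet w n := hfy ▸ hf.1 _ hA
  have hxA := h.mem_compSet_left (T.ι_ne_of_isInterior hw h.mem_left).symm hyA hne
  have hxy : ({x, y} : Set α) ∈ clus T := h.compSet_swap hT ▸ T.compSet_mem_clus h.adj.symm
  have := hf.2 _ hA _ hxy (by simp [hfy]) (by rintro a (rfl | rfl) <;> assumption)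
  exact h.ne (by rw [← hfxy, ← this, hfy])

lemma cords_mem_tripletCoverOf (hT : T.IsFullyResolved) {f : Set α → α}
    (hf : IsStableTransversal (clus T) f) :
    s(x, y) ∈ tripletCoverOf T f ∧ s(y, f (X \ {x, y})) ∈ tripletCoverOf T f ∧
      s(x, f (X \ {x, y})) ∈ tripletCoverOf T f := by
  have hx := T.apply_compSet_ι hf h.mem_left h.adj_left
  have hy := T.apply_compSet_ι hf h.mem_right h.adj_right
  have hz := h.compSet_eq_sdiff hT
  exact ⟨⟨v, _, _, h.isInterior, h.adj_left.symm, h.adj_right.symm, h.ι_ne, by rw [hx, hy]⟩,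
    ⟨v, _, _, h.isInterior, h.adj_right.symm, h.adj, h.ne_right.symm, by rw [hy, hz]⟩,
    ⟨v, _, _, h.isInterior, h.adj_left.symm, h.adj, h.ne_left.symm, by rw [hx, hz]⟩⟩

lemma cord_eq_of_apply_compSet_eq (hT : T.IsFullyResolved) {f : Set α → α}
    (hf : IsStableTransversal (clus T) f) (hfxy : f {x, y} = x) {w n₁ n₂ : T.V}
    (hw : T.IsInterior w) (h₁ : T.tree.Adj w n₁) (h₂ : T.tree.Adj w n₂) (hne : n₁ ≠ n₂)
    (hfy : f (T.compSet w n₁) = y) :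
    s(f (T.compSet w n₁), f (T.compSet w n₂)) = s(x, y) ∨
      s(f (T.compSet w n₁), f (T.compSet w n₂)) = s(y, f (X \ {x, y})) := by
  obtain rfl := h.eq_ι_right_of_apply_compSet_eq hT hf hfxy hw h₁ hfy
  obtain rfl := T.eq_of_adj_ι h.mem_right h.adj_right h₁.symm
  have hn₂ : n₂ ∈ ({T.ι x, T.ι y, u} : Set T.V) := h.neighborSet_eq hT ▸ h₂
  rcases hn₂ with rfl | rfl | rfl
  · rw [hfy, T.apply_compSet_ι hf h.mem_left h.adj_left, Sym2.eq_swap]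
    exact Or.inl rfl
  · exact absurd rfl hne
  · rw [hfy, h.compSet_eq_sdiff hT]
    exact Or.inr rfl

lemma eq_of_mem_tripletCoverOf (hT : T.IsFullyResolved) {f : Set α → α}
    (hf : IsStableTransversal (clus T) f) (hfxy : f {x, y} = x) {c : Sym2 α}
    (hc : c ∈ tripletCoverOf T f) (hy : y ∈ c) : c = s(x, y) ∨ c = s(y, f (X \ {x, y})) := by
  obtain ⟨w, n₁, n₂, hw, h₁, h₂, hne, rfl⟩ := hc
  rcases Sym2.mem_iff.mp hy with hy | hy
  · exact h.cord_eq_of_apply_compSet_eq hT hf hfxy hw h₁ h₂ hne hy.symm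
  · rw [Sym2.eq_swap]
    exact h.cord_eq_of_apply_compSet_eq hT hf hfxy hw h₂ h₁ hne.symm hy.symm

lemma quartet (hT : T.IsFullyResolved) {t z : α} (ht : t ∈ X \ {x, y}) (hz : z ∈ X \ {x, y})
    (htz : t ≠ z) : Quartet T t z x y := by
  refine T.quartet_of_mem_clus ht.1 hz.1 h.mem_left h.mem_right ?_
    (h.compSet_eq_sdiff hT ▸ T.compSet_mem_clus h.adj) ht hz (by simp) (by simp)
  simp only [Set.mem_sdiff, Set.mem_insert_iff, Set.mem_singleton_iff, not_or] at ht hz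
  simp [htz, ht.2.1, ht.2.2, hz.2.1, hz.2.2, h.ne]

end CherryAt

end XTree

open XTree in
theorem cherry_shelling_extension_general {α : Type} (X : Set α)
    (T : XTree α X) (hT : T.IsFullyResolved)
    (f : Set α → α) (hf : IsStableTransversal (clus T) f)
    (L : Set (Sym2 α)) (hL : L = tripletCoverOf T f)
    (x y : α) (hxy : IsCherry T x y) (hfxy : f {x, y} = x)
    (z : α) (hz : z = f (X \ {x, y}))
    (L' : Set (Sym2 α)) (hL' : L' = L \ {s(x, y), s(y, z)})
    (T' : XTree α (X \ {y})) (hT' : IsRestrictionOf T' T)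
    (v : T.V) (hvx : T.tree.Adj (T.ι x) v) (hvy : T.tree.Adj (T.ι y) v)
    (u : T.V) (huv : T.tree.Adj v u) (hux : u ≠ T.ι x) (huy : u ≠ T.ι y)
    (u₂ u₃ : T.V) (hu₂ : T.tree.Adj u u₂) (hu₃ : T.tree.Adj u u₃)
    (h23 : u₂ ≠ u₃) (h2v : u₂ ≠ v) (h3v : u₃ ≠ v)
    (X₂ : Set α) (hX₂ : X₂ = T.compSet u u₂)
    (X₃ : Set α) (hX₃ : X₃ = T.compSet u u₃) (hzX₃ : z ∈ X₃)
    (ord' l₂ l₃ : List (Sym2 α))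
    (hord' : IsShellableOrdering T' L' ord')
    (hl₂nd : l₂.Nodup) (hl₂ : ∀ c, c ∈ l₂ ↔ ∃ t ∈ X₂, c = s(t, y))
    (hl₃nd : l₃.Nodup) (hl₃ : ∀ c, c ∈ l₃ ↔ ∃ t ∈ X₃ \ {z}, c = s(t, y)) :
    IsShellableOrdering T L (ord' ++ l₂ ++ l₃) := by
  have hc : T.CherryAt x y v u := ⟨hxy.2.1, hxy.2.2.1, hxy.1, hvx, hvy, huv, hux, huy⟩
  have hX₂₃ : Disjoint X₂ X₃ := hX₂ ▸ hX₃ ▸ T.disjoint_compSet hu₂ hu₃ h23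
  have hzX : z ∈ X \ {x, y} :=
    hz ▸ hc.compSet_eq_sdiff hT ▸ hf.1 _ (T.compSet_mem_clus huv)
  have hsplit : X₂ ∪ X₃ \ {z} = X \ {x, y, z} := by
    rw [← Set.sdiff_singleton_eq_self (Set.disjoint_right.mp hX₂₃ hzX₃), ← Set.union_sdiff_distrib,
      hX₂, hX₃, hc.union_compSet_eq hT hu₂ hu₃ h23 h2v h3v, Set.sdiff_sdiff, Set.insert_union,
      Set.singleton_union]
  obtain ⟨hxyL, hyzL, hxzL⟩ := hc.cords_mem_tripletCoverOf hT hf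
  subst hL hz
  rw [List.append_assoc]
  refine hord'.append_leaf_cords hT' hc.mem_right hxyL hyzL hxzL
    (fun _ => hc.eq_of_mem_tripletCoverOf hT hf hfxy) hL' ?_ ?_
    (fun t ht => hc.quartet hT ?_ hzX ?_)
  · refine List.nodup_append.mpr ⟨hl₂nd, hl₃nd, ?_⟩
    rintro c hc₂ _ hc₃ rfl
    obtain ⟨t, ht, rfl⟩ := (hl₂ c).1 hc₂
    obtain ⟨t', ht', e⟩ := (hl₃ _).1 hc₃
    exact Set.disjoint_left.mp hX₂₃ ht (Sym2.congr_left.mp e ▸ ht'.1)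
  · intro c
    simp only [List.mem_append, hl₂, hl₃, ← hsplit, Set.mem_union, or_and_right, exists_or]
  · exact ⟨ht.1, fun h => ht.2 (by rcases h with rfl | rfl <;> simp)⟩
  · exact fun h => ht.2 (by simp [h])

open XTree in
/-- extending a shellable ordering through a cherry. With the cherry
reduction set-up (`x, y` a cherry of `T`, `f({x,y}) = x`, `z := f(X - {x,y})`,
`X' := X - {y}`, `T' := T|X'`, `L' := L - {xy, yz}`), let `v` be the interior vertex
adjacent to `x` and `y`, `u` the interior vertex adjacent to `v`, and `X₂, X₃` the leaf
sets of the two components of `T - u` not containing `x` and `y`, with `z ∈ X₃`. Then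
any ordering of `cords X - L` consisting of a shellable ordering of `cords X' - L'`
(w.r.t. `T'`), followed by the cords `ty` with `t ∈ X₂` in any order, followed by the
cords `ty` with `t ∈ X₃ - {z}` in any order, is a shellable ordering of `cords X - L`
with respect to `T`. -/
theorem cherry_shelling_extension {α : Type} (X : Set α) (hfin : X.Finite)
    (hcard : 4 ≤ X.ncard) (T : XTree α X) (hT : T.IsFullyResolved)
    (f : Set α → α) (hf : IsStableTransversal (clus T) f)
    (L : Set (Sym2 α)) (hL : L = tripletCoverOf T f)
    (x y : α) (hxy : IsCherry T x y) (hfxy : f {x, y} = x)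
    (z : α) (hz : z = f (X \ {x, y}))
    (L' : Set (Sym2 α)) (hL' : L' = L \ {s(x, y), s(y, z)})
    (T' : XTree α (X \ {y})) (hT' : IsRestrictionOf T' T)
    (v : T.V) (hvx : T.tree.Adj (T.ι x) v) (hvy : T.tree.Adj (T.ι y) v)
    (u : T.V) (huv : T.tree.Adj v u) (hux : u ≠ T.ι x) (huy : u ≠ T.ι y)
    (u₂ u₃ : T.V) (hu₂ : T.tree.Adj u u₂) (hu₃ : T.tree.Adj u u₃)
    (h23 : u₂ ≠ u₃) (h2v : u₂ ≠ v) (h3v : u₃ ≠ v)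
    (X₂ : Set α) (hX₂ : X₂ = T.compSet u u₂)
    (X₃ : Set α) (hX₃ : X₃ = T.compSet u u₃) (hzX₃ : z ∈ X₃)
    (ord' l₂ l₃ : List (Sym2 α))
    (hord' : IsShellableOrdering T' L' ord')
    (hl₂nd : l₂.Nodup) (hl₂ : ∀ c, c ∈ l₂ ↔ ∃ t ∈ X₂, c = s(t, y))
    (hl₃nd : l₃.Nodup) (hl₃ : ∀ c, c ∈ l₃ ↔ ∃ t ∈ X₃ \ {z}, c = s(t, y)) :
    IsShellableOrdering T L (ord' ++ l₂ ++ l₃) :=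
  cherry_shelling_extension_general X T hT f hf L hL x y hxy hfxy z hz L' hL' T' hT' v hvx hvy u huv
    hux huy u₂ u₃ hu₂ hu₃ h23 h2v h3v X₂ hX₂ X₃ hX₃ hzX₃ ord' l₂ l₃ hord' hl₂nd hl₂ hl₃nd hl₃
end

section
/- Let T be a fully-resolved X-tree with a proper edge-weighting w, let g be a stable transversal for the collection 2^X of all nonempty subsets of X (for instance g(A) = min A under a fixed total ordering of X). For each cluster A ∈ clus(T), let e be the edge of T inducing the split A | (X − A), and let A_w ⊆ A be the set of leaves in A whose weighted path distance in T to e is minimal. Then the function f defined on clus(T) by f(A) := g(A_w) is a stable transversal for clus(T). -/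
open SimpleGraph

/-! If the cluster `B` of an edge `e'` (on the side of its endpoint `u'`) lies strictly inside
the cluster `A` of an edge `e` (on the side of `u`), then `u` is cut off from `u'` by `e'`, so
the path from any leaf of `B` to `u` runs through `u'`. On `B` the distance to `u` is therefore
the distance to `u'` plus the constant `d(u', u)`. Hence if `f(A) = g(A_w)` lies in `B`, the set
`B_w` of leaves of `B` closest to `u'` contains `g(A_w)` and is contained in `A_w`, and stability
of `g` gives `g(A_w) = g(B_w)`. -/

namespace SimpleGraph

variable {V : Type*} {G : SimpleGraph V} {u v x y : V}

lemma IsAcyclic.dist_eq_length_of_isPath (hG : G.IsAcyclic) {p : G.Walk u v} (hp : p.IsPath) :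
    G.dist u v = p.length := by
  obtain ⟨q, hq, hq_len⟩ := p.reachable.exists_path_of_dist
  rw [← hq_len, Subtype.mk.inj ((hG.subsingleton_path u v).elim ⟨q, hq⟩ ⟨p, hp⟩)]

/- A vertex farthest from `u` works: a neighbour other than the penultimate vertex of a
geodesic to it would extend the geodesic to a longer path, hence be farther from `u`. -/
lemma IsAcyclic.exists_reachable_subsingleton_neighborSet [Finite V] (hG : G.IsAcyclic)
    (u : V) : ∃ x, G.Reachable u x ∧ (G.neighborSet x).Subsingleton := by
  obtain ⟨x, hux, hmax⟩ :=
    Set.exists_max_image {x | G.Reachable u x} (G.dist u) (Set.toFinite _) ⟨u, .refl u⟩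
  obtain ⟨p, hp, hp_len⟩ := Reachable.exists_path_of_dist hux
  refine ⟨x, hux, Set.subsingleton_of_subset_singleton (a := p.penultimate)
    fun y (hxy : G.Adj x y) => ?_⟩
  by_contra hy
  have hyp : y ∉ p.support := fun h => hy (hG.eq_penultimate_of_adj_end hp hxy h)
  have hdist := hG.dist_eq_length_of_isPath (hp.concat hyp hxy)
  have hle := hmax y (hux.trans hxy.reachable)
  rw [Walk.length_concat] at hdist
  omega

lemma IsBridge.reachable_deleteEdges_or (hb : G.IsBridge s(u, v)) (hxu : G.Reachable x u) :
    (G.deleteEdges {s(u, v)}).Reachable x u ∨ (G.deleteEdges {s(u, v)}).Reachable x v := by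
  by_contra! h
  obtain ⟨p, hp⟩ := hxu.exists_isPath
  exact hp.isTrail.not_mem_edges_of_not_reachable h.2 (isBridge_iff.mp hb)
    (p.mem_edges_of_not_reachable_deleteEdges h.1)

lemma Walk.mem_support_of_not_reachable_deleteEdges (p : G.Walk x y) {e : Sym2 V} (hu : u ∈ e)
    (hxu : (G.deleteEdges {e}).Reachable x u) (huy : ¬ (G.deleteEdges {e}).Reachable u y) :
    u ∈ p.support :=
  p.mem_support_of_mem_edges
    (p.mem_edges_of_not_reachable_deleteEdges fun hxy => huy (hxu.symm.trans hxy)) hu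

lemma reachable_deleteEdges_of_not_reachable {e e' : Sym2 V} (hu : u ∈ e)
    (hxy : (G.deleteEdges {e'}).Reachable x y) (huy : ¬ (G.deleteEdges {e'}).Reachable u y) :
    (G.deleteEdges {e}).Reachable x y := by
  classical
  obtain ⟨p⟩ := hxy
  have he : e ∉ p.edges := fun he => huy ⟨p.dropUntil u (p.mem_support_of_mem_edges he hu)⟩
  have hp : ∀ d ∈ p.edges, d ∉ ({e} : Set (Sym2 V)) := fun d hd hde => he (hde ▸ hd)
  exact (p.toDeleteEdges {e} hp).reachable.mono (deleteEdges_mono (deleteEdges_le _))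

end SimpleGraph

namespace XTree

variable {α : Type} {X : Set α} (T : XTree α X)

lemma finite (T : XTree α X) : X.Finite :=
  have := T.fintypeV
  Set.Finite.of_finite_image (Set.toFinite _) T.ι_injOn

lemma pathDist_eq_add_of_mem_support (w : Sym2 T.V → ℝ) {x y z : T.V}
    (hy : y ∈ (T.treePath x z).support) :
    T.pathDist w x z = T.pathDist w x y + T.pathDist w y z := by
  classical
  have hp := T.treePath_isPath x z
  have htake : T.treePath x y = (T.treePath x z).takeUntil y hy :=
    (T.isTree.existsUnique_path x y).unique (T.treePath_isPath x y) (hp.takeUntil hy)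
  have hdrop : T.treePath y z = (T.treePath x z).dropUntil y hy :=
    (T.isTree.existsUnique_path y z).unique (T.treePath_isPath y z) (hp.dropUntil hy)
  unfold pathDist
  rw [htake, hdrop, ← List.sum_append, ← List.map_append, ← Walk.edges_append,
    Walk.take_spec]

/- A vertex of degree at most one in `T - e` has degree at most two in `T`, hence is a leaf, since
no vertex of `T` has degree two. -/
lemma sideSet_nonempty {e : Sym2 T.V} (he : e ∈ T.tree.edgeSet) (u : T.V) :
    (T.sideSet e u).Nonempty := by
  have := T.fintypeV
  have : Nontrivial T.V := (isAcyclic_iff_forall_isBridge.mp T.isTree.isAcyclic he).nontrivial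
  set G := T.tree.deleteEdges {e}
  obtain ⟨x, hux, hx⟩ :=
    (T.isTree.isAcyclic.anti (deleteEdges_le _)).exists_reachable_subsingleton_neighborSet u
  have hsub : T.tree.neighborSet x ⊆ G.neighborSet x ∪ {y | s(x, y) = e} := fun y hy => by
    by_cases hxy : s(x, y) = e
    exacts [Or.inr hxy, Or.inl (deleteEdges_adj.mpr ⟨hy, hxy⟩)]
  have hedge : {y | s(x, y) = e}.Subsingleton := fun y hy y' hy' =>
    Sym2.congr_right.mp (hy.trans hy'.symm)
  have hle : (T.tree.neighborSet x).ncard ≤ 2 :=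
    calc (T.tree.neighborSet x).ncard
        ≤ (G.neighborSet x ∪ {y | s(x, y) = e}).ncard := Set.ncard_le_ncard hsub
      _ ≤ (G.neighborSet x).ncard + {y | s(x, y) = e}.ncard := Set.ncard_union_le _ _
      _ ≤ 1 + 1 := add_le_add (Set.ncard_le_one_iff_subsingleton.mpr hx)
          (Set.ncard_le_one_iff_subsingleton.mpr hedge)
  have hpos : 0 < (T.tree.neighborSet x).ncard :=
    (Set.ncard_pos (Set.toFinite _)).mpr
      (T.tree.neighborSet_nonempty.mpr (T.isTree.connected.preconnected.not_isIsolated x))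
  have hne := T.no_deg_two x
  obtain ⟨a, ha, rfl⟩ := (T.leaf_iff x).mp (by omega)
  exact ⟨a, ha, hux.symm⟩

lemma not_reachable_of_sideSet_ssubset {e e' : Sym2 T.V} (he : e ∈ T.tree.edgeSet)
    (he' : e' ∈ T.tree.edgeSet) {u u' : T.V} (hu : u ∈ e) (hu' : u' ∈ e')
    (hss : T.sideSet e' u' ⊂ T.sideSet e u) :
    ¬ (T.tree.deleteEdges {e'}).Reachable u' u := by
  intro hu'u
  obtain ⟨v, rfl⟩ := Sym2.mem_iff_exists.mp hu
  obtain ⟨v', rfl⟩ := Sym2.mem_iff_exists.mp hu'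
  have hbridge := isAcyclic_iff_forall_isBridge.mp T.isTree.isAcyclic
  -- the `v'`-side of `e'` lies on the `v'`-side of `e`, as `e'` separates `u` from `v'`
  have hside : ∀ x, (T.tree.deleteEdges {s(u', v')}).Reachable x v' →
      (T.tree.deleteEdges {s(u, v)}).Reachable x v' := fun x hx =>
    reachable_deleteEdges_of_not_reachable (Sym2.mem_mk_left u v) hx
      fun h => isBridge_iff.mp (hbridge he') (hu'u.trans h)
  have hout : ∀ a ∈ X, a ∉ T.sideSet s(u', v') u' →
      (T.tree.deleteEdges {s(u, v)}).Reachable (T.ι a) v' := fun a ha haB =>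
    hside _ (((hbridge he').reachable_deleteEdges_or (T.isTree.connected _ _)).resolve_left
      fun h => haB ⟨ha, h⟩)
  obtain ⟨a, haA, haB⟩ := Set.exists_of_ssubset hss
  have hv'u := (hout a haA.1 haB).symm.trans haA.2
  obtain ⟨c, hcX, hcv⟩ := T.sideSet_nonempty he v
  have hcA : c ∉ T.sideSet s(u, v) u := fun h => isBridge_iff.mp (hbridge he) (h.2.symm.trans hcv)
  exact hcA ⟨hcX, (hout c hcX fun h => hcA (hss.subset h)).trans hv'u⟩

lemma pathDist_eq_add_of_sideSet_ssubset (w : Sym2 T.V → ℝ) {e e' : Sym2 T.V}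
    (he : e ∈ T.tree.edgeSet) (he' : e' ∈ T.tree.edgeSet) {u u' : T.V} (hu : u ∈ e)
    (hu' : u' ∈ e') (hss : T.sideSet e' u' ⊂ T.sideSet e u) :
    ∀ b ∈ T.sideSet e' u',
      T.pathDist w (T.ι b) u = T.pathDist w (T.ι b) u' + T.pathDist w u' u :=
  fun _ hb => T.pathDist_eq_add_of_mem_support w <|
    (T.treePath _ _).mem_support_of_not_reachable_deleteEdges hu' hb.2
      (T.not_reachable_of_sideSet_ssubset he he' hu hu' hss)

/-- `A_w` in the notation of the paper, where `u` is the endpoint on the `A`-side of the edge. -/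
def closestLeaves (w : Sym2 T.V → ℝ) (A : Set α) (u : T.V) : Set α :=
  {a ∈ A | ∀ b ∈ A, T.pathDist w (T.ι a) u ≤ T.pathDist w (T.ι b) u}

variable {T} {w : Sym2 T.V → ℝ} {A B : Set α} {u u' : T.V}

lemma closestLeaves_subset : T.closestLeaves w A u ⊆ A := Set.sep_subset _ _

lemma closestLeaves_nonempty (hA : A.Finite) (hne : A.Nonempty) :
    (T.closestLeaves w A u).Nonempty :=
  let ⟨a, ha, hmin⟩ := Set.exists_min_image A _ hA hne
  ⟨a, ha, hmin⟩

lemma mem_closestLeaves_of_eq_add {c : ℝ} (hBA : B ⊆ A)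
    (hshift : ∀ b ∈ B, T.pathDist w (T.ι b) u = T.pathDist w (T.ι b) u' + c)
    {a : α} (ha : a ∈ T.closestLeaves w A u) (haB : a ∈ B) : a ∈ T.closestLeaves w B u' :=
  ⟨haB, fun b hb => by linarith [hshift a haB, hshift b hb, ha.2 b (hBA hb)]⟩

lemma closestLeaves_subset_of_eq_add {c : ℝ} (hBA : B ⊆ A)
    (hshift : ∀ b ∈ B, T.pathDist w (T.ι b) u = T.pathDist w (T.ι b) u' + c)
    {a : α} (ha : a ∈ T.closestLeaves w A u) (haB : a ∈ B) :
    T.closestLeaves w B u' ⊆ T.closestLeaves w A u :=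
  fun b hb => ⟨hBA hb.1, fun x hx => by
    linarith [hshift a haB, hshift b hb.1, hb.2 a haB, ha.2 x hx]⟩

end XTree

open XTree in
theorem closest_leaves_stable_transversal_general {α : Type} (X : Set α) (T : XTree α X)
    (w : Sym2 T.V → ℝ)
    (g : Set α → α) (hg : IsStableTransversal {A : Set α | A ⊆ X ∧ A.Nonempty} g)
    (f : Set α → α)
    (hf : ∀ A ∈ clus T, ∀ e ∈ T.tree.edgeSet, ∀ u, u ∈ e → A = T.sideSet e u →
      f A = g {a | a ∈ A ∧ ∀ b ∈ A, T.pathDist w (T.ι a) u ≤ T.pathDist w (T.ι b) u}) :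
    IsStableTransversal (clus T) f := by
  obtain ⟨hg_mem, hg_stable⟩ := hg
  have hclosest : ∀ e ∈ T.tree.edgeSet, ∀ u,
      T.closestLeaves w (T.sideSet e u) u ∈ {A : Set α | A ⊆ X ∧ A.Nonempty} :=
    fun e he u => ⟨closestLeaves_subset.trans fun _ ha => ha.1,
      closestLeaves_nonempty (T.finite.subset fun _ ha => ha.1) (T.sideSet_nonempty he u)⟩
  have hf_eq : ∀ e ∈ T.tree.edgeSet, ∀ u ∈ e,
      f (T.sideSet e u) = g (T.closestLeaves w (T.sideSet e u) u) :=
    fun e he u hu => hf _ ⟨e, he, u, hu, rfl⟩ e he u hu rfl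
  refine ⟨?_, ?_⟩
  · rintro _ ⟨e, he, u, hu, rfl⟩
    exact hf_eq e he u hu ▸ closestLeaves_subset (hg_mem _ (hclosest e he u))
  · rintro _ ⟨e, he, u, hu, rfl⟩ _ ⟨e', he', u', hu', rfl⟩ hfB hBA
    rcases hBA.eq_or_ssubset with hBA | hss
    · rw [hBA]
    rw [hf_eq e he u hu] at hfB ⊢
    rw [hf_eq e' he' u' hu']
    have hshift := T.pathDist_eq_add_of_sideSet_ssubset w he he' hu hu' hss
    have hgA := hg_mem _ (hclosest e he u)
    exact hg_stable _ (hclosest e he u) _ (hclosest e' he' u')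
      (mem_closestLeaves_of_eq_add hBA hshift hgA hfB)
      (closestLeaves_subset_of_eq_add hBA hshift hgA hfB)

open XTree in
/-- Let `T` be a fully-resolved `X`-tree with a proper edge-weighting `w`
and `g` a stable transversal for the collection of all nonempty subsets of `X`. If, for
each cluster `A ∈ clus(T)` with inducing edge `e` (whose endpoint on the `A`-side is
`u`), `f(A) = g(A_w)` where `A_w` is the set of leaves of `A` closest to `e`, then `f`
is a stable transversal for `clus(T)`. -/
theorem closest_leaves_stable_transversal {α : Type} (X : Set α) (hfin : X.Finite)
    (hcard : 3 ≤ X.ncard) (T : XTree α X) (hT : T.IsFullyResolved)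
    (w : Sym2 T.V → ℝ) (hw : T.IsProperWeighting w)
    (g : Set α → α) (hg : IsStableTransversal {A : Set α | A ⊆ X ∧ A.Nonempty} g)
    (f : Set α → α)
    (hf : ∀ A ∈ clus T, ∀ e ∈ T.tree.edgeSet, ∀ u, u ∈ e → A = T.sideSet e u →
      f A = g {a | a ∈ A ∧ ∀ b ∈ A, T.pathDist w (T.ι a) u ≤ T.pathDist w (T.ι b) u}) :
    IsStableTransversal (clus T) f :=
  closest_leaves_stable_transversal_general X T w g hg f hf
end
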